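/- arXiv:2107.11357 — 14 statements merged into one kernel-verified Lean document; each statement's English description precedes it below -/
import Mathlib

section
/- Suppose an index φ satisfies linearity and the joint null axiom (if v(S ∪ T) = v(S) for all S ⊆ N∖T then φ_T(v) = 0), and φ_T(v) = Σ_{S⊆N} a_S^T v(S) for constants a_S^T. Then for every nonempty T ⊆ N and every nonempty S ⊆ N∖T, a_S^T = −a_{S∪T}^T. -/
open Finset

/-!
For `T ≠ ∅` and `∅ ≠ S ⊆ N \ T`, the game `v = 𝟙_{S} + 𝟙_{S ∪ T}` vanishes at `∅`, and adding
`T` to a coalition `X ⊆ N \ T` does not change `v X`: both sides are `1` if `X = S` and `0`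
otherwise. By the joint null axiom `φ_T(v) = 0`, while the representation gives
`φ_T(v) = a_S^T + a_{S∪T}^T`.
-/

namespace Finset

variable {α : Type*} [Fintype α] [DecidableEq α]

theorem eq_of_union_eq_union_of_subset_compl {S T X : Finset α} (hS : S ⊆ Tᶜ) (hX : X ⊆ Tᶜ)
    (h : X ∪ T = S ∪ T) : X = S := by
  have hXT : Disjoint X T := disjoint_compl_left.mono_left hX
  have hST : Disjoint S T := disjoint_compl_left.mono_left hS
  rw [← union_sdiff_cancel_right hXT, ← union_sdiff_cancel_right hST, h]

end Finset

section NullPairGame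

variable {α : Type*} [DecidableEq α]

def nullPairGame (S T : Finset α) (X : Finset α) : ℝ :=
  (if X = S then 1 else 0) + (if X = S ∪ T then 1 else 0)

theorem nullPairGame_empty {S T : Finset α} (hS : S.Nonempty) : nullPairGame S T ∅ = 0 := by
  have hST : (S ∪ T).Nonempty := hS.mono subset_union_left
  simp [nullPairGame, hS.ne_empty.symm, hST.ne_empty.symm]

theorem nullPairGame_union [Fintype α] {S T X : Finset α} (hT : T.Nonempty) (hS : S ⊆ Tᶜ)
    (hX : X ⊆ Tᶜ) :
    nullPairGame S T (X ∪ T) = nullPairGame S T X := by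
  obtain ⟨t, ht⟩ := hT
  have hXT_ne_S : X ∪ T ≠ S := fun h => mem_compl.mp (hS (h ▸ mem_union_right X ht)) ht
  have hX_ne_ST : X ≠ S ∪ T := fun h => mem_compl.mp (hX (h ▸ mem_union_right S ht)) ht
  have hiff : X ∪ T = S ∪ T ↔ X = S :=
    ⟨eq_of_union_eq_union_of_subset_compl hS hX, fun h => h ▸ rfl⟩
  simp [nullPairGame, hXT_ne_S, hX_ne_ST, hiff]

theorem sum_mul_nullPairGame [Fintype α] (c : Finset α → ℝ) (S T : Finset α) :
    ∑ X, c X * nullPairGame S T X = c S + c (S ∪ T) := by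
  simp [nullPairGame, mul_add, sum_add_distrib]

end NullPairGame

theorem stmt1_general (n : ℕ)
    (φ : (Finset (Fin n) → ℝ) → Finset (Fin n) → ℝ)
    (a : Finset (Fin n) → Finset (Fin n) → ℝ)
    (hnull : ∀ v : Finset (Fin n) → ℝ, v ∅ = 0 → ∀ T : Finset (Fin n),
      (∀ S ⊆ Tᶜ, v (S ∪ T) = v S) → φ v T = 0)
    (hrep : ∀ v : Finset (Fin n) → ℝ, v ∅ = 0 → ∀ T : Finset (Fin n), T.Nonempty →
      φ v T = ∑ S : Finset (Fin n), a T S * v S) :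
    ∀ T : Finset (Fin n), T.Nonempty → ∀ S ⊆ Tᶜ, S.Nonempty →
      a T S = - a T (S ∪ T) := by
  intro T hT S hS hSne
  have hv0 := nullPairGame_empty (T := T) hSne
  have hzero := hnull _ hv0 T fun X hX => nullPairGame_union hT hS hX
  rw [hrep _ hv0 T hT, sum_mul_nullPairGame] at hzero
  linarith

/-- Lemma (first part): if `φ` is linear, satisfies the joint null axiom, and
`φ v T = ∑ S, a T S * v S`, then for every nonempty `T` and nonempty `S ⊆ N \ T`,
`a T S = - a T (S ∪ T)`. -/
theorem stmt1 (n : ℕ)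
    (φ : (Finset (Fin n) → ℝ) → Finset (Fin n) → ℝ)
    (a : Finset (Fin n) → Finset (Fin n) → ℝ)
    (hadd : ∀ v w : Finset (Fin n) → ℝ, v ∅ = 0 → w ∅ = 0 →
      ∀ T : Finset (Fin n), φ (v + w) T = φ v T + φ w T)
    (hsmul : ∀ (c : ℝ) (v : Finset (Fin n) → ℝ), v ∅ = 0 →
      ∀ T : Finset (Fin n), φ (c • v) T = c * φ v T)
    (hnull : ∀ v : Finset (Fin n) → ℝ, v ∅ = 0 → ∀ T : Finset (Fin n),
      (∀ S ⊆ Tᶜ, v (S ∪ T) = v S) → φ v T = 0)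
    (hrep : ∀ v : Finset (Fin n) → ℝ, v ∅ = 0 → ∀ T : Finset (Fin n), T.Nonempty →
      φ v T = ∑ S : Finset (Fin n), a T S * v S) :
    ∀ T : Finset (Fin n), T.Nonempty → ∀ S ⊆ Tᶜ, S.Nonempty →
      a T S = - a T (S ∪ T) :=
  stmt1_general n φ a hnull hrep
end

section
/- Suppose an index φ satisfies linearity and the joint null axiom, and φ_T(v) = Σ_{S⊆N} a_S^T v(S) for constants a_S^T. Then for every nonempty T ⊆ N, every S ⊆ N∖T, and every nonempty proper subset H ⊊ T, the constant a_{S∪H}^T = 0. -/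
/-!
Evaluating the representation of `φ_T` on the game that is `1` on the single coalition
`R = S ∪ H` and `0` elsewhere yields `a_R^T`. Since `R ∩ T = H` is nonempty but not all of `T`,
this game is null for `T`, so the joint null axiom forces `a_R^T = 0`.
-/

open Finset

section IndicatorGame

variable {α : Type*} [Fintype α] [DecidableEq α]

/-- Both sides vanish: `S ∪ T ⊇ T` and `S ⊆ Tᶜ` both differ from `R`, which meets `T`
without containing it. -/
theorem pi_single_union_eq_of_subset_compl {T R S : Finset α} (hRT : (R ∩ T).Nonempty)
    (hTR : ¬ T ⊆ R) (hS : S ⊆ Tᶜ) :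
    (Pi.single R 1 : Finset α → ℝ) (S ∪ T) = (Pi.single R 1 : Finset α → ℝ) S := by
  have hST : S ∪ T ≠ R := fun h => hTR (h ▸ subset_union_right)
  have hSR : S ≠ R := by
    rintro rfl
    obtain ⟨x, hx⟩ := hRT
    exact mem_compl.mp (hS (mem_of_mem_inter_left hx)) (mem_of_mem_inter_right hx)
  rw [Pi.single_apply, Pi.single_apply, if_neg hST, if_neg hSR]

theorem coeff_eq_zero_of_jointNull (φ : (Finset α → ℝ) → Finset α → ℝ)
    (a : Finset α → Finset α → ℝ)
    (hnull : ∀ v : Finset α → ℝ, v ∅ = 0 → ∀ T : Finset α,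
      (∀ S ⊆ Tᶜ, v (S ∪ T) = v S) → φ v T = 0)
    (hrep : ∀ v : Finset α → ℝ, v ∅ = 0 → ∀ T : Finset α, T.Nonempty →
      φ v T = ∑ S : Finset α, a T S * v S)
    {T R : Finset α} (hRT : (R ∩ T).Nonempty) (hTR : ¬ T ⊆ R) :
    a T R = 0 := by
  set v : Finset α → ℝ := Pi.single R 1
  have hR : R ≠ ∅ := nonempty_iff_ne_empty.mp (hRT.mono inter_subset_left)
  have hv : v ∅ = 0 := Pi.single_eq_of_ne hR.symm 1
  calc a T R = ∑ S : Finset α, a T S * v S := by simp [v, Pi.single_apply]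
    _ = φ v T := (hrep v hv T (hRT.mono inter_subset_right)).symm
    _ = 0 := hnull v hv T fun _ => pi_single_union_eq_of_subset_compl hRT hTR

end IndicatorGame

theorem stmt2_general (n : ℕ)
    (φ : (Finset (Fin n) → ℝ) → Finset (Fin n) → ℝ)
    (a : Finset (Fin n) → Finset (Fin n) → ℝ)
    (hnull : ∀ v : Finset (Fin n) → ℝ, v ∅ = 0 → ∀ T : Finset (Fin n),
      (∀ S ⊆ Tᶜ, v (S ∪ T) = v S) → φ v T = 0)
    (hrep : ∀ v : Finset (Fin n) → ℝ, v ∅ = 0 → ∀ T : Finset (Fin n), T.Nonempty →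
      φ v T = ∑ S : Finset (Fin n), a T S * v S) :
    ∀ T : Finset (Fin n), T.Nonempty → ∀ S ⊆ Tᶜ, ∀ H : Finset (Fin n),
      H.Nonempty → H ⊂ T → a T (S ∪ H) = 0 := by
  intro T _ S hS H hH hHT
  have hST : Disjoint S T := subset_compl_iff_disjoint_right.mp hS
  have hSHT : (S ∪ H) ∩ T = H := by
    rw [union_inter_distrib_right, disjoint_iff_inter_eq_empty.mp hST, empty_union,
      inter_eq_left.mpr hHT.subset]
  refine coeff_eq_zero_of_jointNull φ a hnull hrep (by rwa [hSHT]) fun hT => ?_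
  exact hHT.not_subset (hSHT ▸ subset_inter hT subset_rfl)

/-- Lemma (second part): if `φ` is linear, satisfies the joint null axiom, and
`φ v T = ∑ S, a T S * v S`, then for every nonempty `T`, every `S ⊆ N \ T`, and
every nonempty proper subset `H ⊊ T`, the constant `a T (S ∪ H) = 0`. -/
theorem stmt2 (n : ℕ)
    (φ : (Finset (Fin n) → ℝ) → Finset (Fin n) → ℝ)
    (a : Finset (Fin n) → Finset (Fin n) → ℝ)
    (hadd : ∀ v w : Finset (Fin n) → ℝ, v ∅ = 0 → w ∅ = 0 →
      ∀ T : Finset (Fin n), φ (v + w) T = φ v T + φ w T)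
    (hsmul : ∀ (c : ℝ) (v : Finset (Fin n) → ℝ), v ∅ = 0 →
      ∀ T : Finset (Fin n), φ (c • v) T = c * φ v T)
    (hnull : ∀ v : Finset (Fin n) → ℝ, v ∅ = 0 → ∀ T : Finset (Fin n),
      (∀ S ⊆ Tᶜ, v (S ∪ T) = v S) → φ v T = 0)
    (hrep : ∀ v : Finset (Fin n) → ℝ, v ∅ = 0 → ∀ T : Finset (Fin n), T.Nonempty →
      φ v T = ∑ S : Finset (Fin n), a T S * v S) :
    ∀ T : Finset (Fin n), T.Nonempty → ∀ S ⊆ Tᶜ, ∀ H : Finset (Fin n),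
      H.Nonempty → H ⊂ T → a T (S ∪ H) = 0 :=
  stmt2_general n φ a hnull hrep
end

section
/- If an index φ satisfies linearity and the joint null axiom, then there exist real constants p^T(S), for each nonempty T ⊆ N and S ⊆ N∖T, such that φ_T(v) = Σ_{S ⊆ N∖T} p^T(S) · [v(S∪T) − v(S)] for every game v and every nonempty T ⊆ N. -/
/-!
Fix a nonempty `T`. Subtracting from `v` the combination of the point-mass games `δ_{S ∪ T}`
(for `S ⊆ Tᶜ`) weighted by the marginal contributions `v (S ∪ T) - v S` leaves a game in which
`T` is jointly null, so by linearity `φ v T` is the same combination of the values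
`p T S := φ δ_{S ∪ T} T`.
-/

open Finset

section PointMasses

variable {α : Type*} [DecidableEq α] {T Q : Finset α}

lemma pointMass_union_apply_empty (S : Finset α) (hT : T.Nonempty) :
    (Pi.single (S ∪ T) (1 : ℝ) : Finset α → ℝ) ∅ = 0 :=
  Pi.single_eq_of_ne (fun h => (hT.mono subset_union_right).ne_empty h.symm) _

variable [Fintype α]

lemma sum_smul_pointMass_union_apply_of_subset_compl (c : Finset α → ℝ) (hT : T.Nonempty)
    (hQ : Q ⊆ Tᶜ) : (∑ S ∈ Tᶜ.powerset, c S • Pi.single (S ∪ T) (1 : ℝ)) Q = 0 := by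
  obtain ⟨t, ht⟩ := hT
  refine (Finset.sum_apply _ _ _).trans (Finset.sum_eq_zero fun S _ => ?_)
  have hQT : Q ≠ S ∪ T := fun h => mem_compl.mp (hQ (h ▸ mem_union_right S ht)) ht
  simp [hQT]

lemma sum_smul_pointMass_union_apply_union (c : Finset α → ℝ) (hQ : Q ⊆ Tᶜ) :
    (∑ S ∈ Tᶜ.powerset, c S • Pi.single (S ∪ T) (1 : ℝ)) (Q ∪ T) = c Q := by
  rw [Finset.sum_apply, Finset.sum_eq_single_of_mem Q (mem_powerset.mpr hQ)]
  · simp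
  · intro S hS hSQ
    have hQT : Q ∪ T ≠ S ∪ T := fun h => hSQ <| by
      rw [← union_sdiff_cancel_right (subset_compl_iff_disjoint_right.mp (mem_powerset.mp hS)),
        ← h, union_sdiff_cancel_right (subset_compl_iff_disjoint_right.mp hQ)]
    simp [hQT]

end PointMasses

lemma map_sum_smul_of_linear {α ι : Type*} (φ : (Finset α → ℝ) → Finset α → ℝ)
    (hadd : ∀ v w : Finset α → ℝ, v ∅ = 0 → w ∅ = 0 → ∀ T, φ (v + w) T = φ v T + φ w T)
    (hsmul : ∀ (c : ℝ) (v : Finset α → ℝ), v ∅ = 0 → ∀ T, φ (c • v) T = c * φ v T)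
    (s : Finset ι) (c : ι → ℝ) (f : ι → Finset α → ℝ) (hf : ∀ i, f i ∅ = 0) (T : Finset α) :
    φ (∑ i ∈ s, c i • f i) T = ∑ i ∈ s, c i * φ (f i) T := by
  induction s using Finset.cons_induction with
  | empty => simpa using hsmul 0 0 rfl T
  | cons i s hi ih =>
    rw [sum_cons, sum_cons, hadd _ _ (by simp [hf]) (by simp [Finset.sum_apply, hf]),
      hsmul _ _ (hf i), ih]

/-- Proposition: if `φ` is linear and satisfies the joint null axiom, then there
exist constants `p T S` (for nonempty `T` and `S ⊆ N \ T`) with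
`φ v T = ∑_{S ⊆ N \ T} p T S * (v (S ∪ T) - v S)` for every game `v`. -/
theorem stmt3 (n : ℕ)
    (φ : (Finset (Fin n) → ℝ) → Finset (Fin n) → ℝ)
    (hadd : ∀ v w : Finset (Fin n) → ℝ, v ∅ = 0 → w ∅ = 0 →
      ∀ T : Finset (Fin n), φ (v + w) T = φ v T + φ w T)
    (hsmul : ∀ (c : ℝ) (v : Finset (Fin n) → ℝ), v ∅ = 0 →
      ∀ T : Finset (Fin n), φ (c • v) T = c * φ v T)
    (hnull : ∀ v : Finset (Fin n) → ℝ, v ∅ = 0 → ∀ T : Finset (Fin n),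
      (∀ S ⊆ Tᶜ, v (S ∪ T) = v S) → φ v T = 0) :
    ∃ p : Finset (Fin n) → Finset (Fin n) → ℝ,
      ∀ v : Finset (Fin n) → ℝ, v ∅ = 0 → ∀ T : Finset (Fin n), T.Nonempty →
        φ v T = ∑ S ∈ Tᶜ.powerset, p T S * (v (S ∪ T) - v S) := by
  refine ⟨fun T S => φ (Pi.single (S ∪ T) 1) T, fun v hv0 T hT => ?_⟩
  set u := ∑ S ∈ Tᶜ.powerset, (v (S ∪ T) - v S) • Pi.single (S ∪ T) (1 : ℝ)
  have hu0 : u ∅ = 0 := sum_smul_pointMass_union_apply_of_subset_compl _ hT (empty_subset _)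
  have hr0 : (v - u) ∅ = 0 := by simp [hv0, hu0]
  have hr_null : φ (v - u) T = 0 := hnull _ hr0 T fun S hS => by
    simp [sum_smul_pointMass_union_apply_union _ hS,
      sum_smul_pointMass_union_apply_of_subset_compl _ hT hS, u]
  calc φ v T = φ (u + (v - u)) T := by rw [add_sub_cancel]
    _ = φ u T := by rw [hadd _ _ hu0 hr0, hr_null, add_zero]
    _ = _ := by
      rw [map_sum_smul_of_linear φ hadd hsmul _ _ _ (pointMass_union_apply_empty · hT)]
      simp only [mul_comm]
end

section
/- Let 1 ≤ k ≤ n and suppose φ_T(v) = Σ_{S ⊆ N∖T} p^T(S)[v(S∪T) − v(S)] for constants p^T(S). Then φ satisfies joint efficiency of order k (i.e., Σ over nonempty T ⊆ N with |T| ≤ k of φ_T(v) equals v(N) for all games v) if and only if for every nonempty S ⊆ N, δ_N(S) = Σ_{∅≠T⊆S, |T|≤k} p^T(S∖T) − Σ_{∅≠T⊆N∖S, |T|≤k} p^T(S), where δ_N(S) = 1 if S = N and 0 otherwise. -/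
open Finset

/-!
Both sides of joint efficiency are linear in the game `v`. Collecting, for every coalition `A`,
the coefficient of `v A` in `∑_{T nonempty, |T| ≤ k} φ_T(v)` gives exactly the right-hand side
of the `δ_N` equation at `A`: `v A` enters positively through `v (S ∪ T)` with `S = A \ T` for
`T ⊆ A`, and negatively through `v S` with `S = A` for `T ⊆ N \ A`. Testing against the games
that are the indicator of a single nonempty coalition shows that the coefficients must be `δ_N`.
-/

variable {α : Type*} [Fintype α] [DecidableEq α]

/-- The coefficient of `v A` in `∑_{T ∈ P} ∑_{S ⊆ Tᶜ} p T S * (v (S ∪ T) - v S)`. -/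
def jointCoeff (P : Finset α → Prop) [DecidablePred P] (p : Finset α → Finset α → ℝ)
    (A : Finset α) : ℝ :=
  (∑ T ∈ A.powerset.filter P, p T (A \ T)) - ∑ T ∈ Aᶜ.powerset.filter P, p T A

theorem sum_powerset_compl_union_eq (T : Finset α) (g : Finset α → Finset α → ℝ) :
    ∑ S ∈ Tᶜ.powerset, g S (S ∪ T) = ∑ A, if T ⊆ A then g (A \ T) A else 0 := by
  have cancel : ∀ S ∈ Tᶜ.powerset, (S ∪ T) \ T = S := by
    intro S hS
    rw [mem_powerset, subset_compl_iff_disjoint_right] at hS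
    rw [union_sdiff_right, hS.sdiff_eq_left]
  rw [← sum_filter]
  refine sum_nbij' (· ∪ T) (· \ T) ?_ ?_ cancel ?_ fun S hS => by rw [cancel S hS]
  · intro S _
    simp
  · intro A _
    simp [subset_iff]
  · intro A hA
    simpa using hA

theorem sum_powerset_compl_eq (T : Finset α) (g : Finset α → ℝ) :
    ∑ S ∈ Tᶜ.powerset, g S = ∑ A, if T ⊆ Aᶜ then g A else 0 := by
  rw [← sum_filter]
  congr 1
  ext A
  simp [subset_compl_comm]

theorem sum_sum_marginal_eq_sum_jointCoeff_mul (P : Finset α → Prop) [DecidablePred P]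
    (p : Finset α → Finset α → ℝ) (v : Finset α → ℝ) :
    ∑ T ∈ univ.filter P, ∑ S ∈ Tᶜ.powerset, p T S * (v (S ∪ T) - v S)
      = ∑ A, jointCoeff P p A * v A := by
  have expand : ∀ T, ∑ S ∈ Tᶜ.powerset, p T S * (v (S ∪ T) - v S)
      = ∑ A, ((if T ⊆ A then p T (A \ T) * v A else 0)
          - if T ⊆ Aᶜ then p T A * v A else 0) := by
    intro T
    simp only [mul_sub, sum_sub_distrib]
    rw [sum_powerset_compl_union_eq T (fun S A => p T S * v A),
      sum_powerset_compl_eq T (fun S => p T S * v S)]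
  rw [sum_congr rfl fun T _ => expand T, sum_comm]
  refine sum_congr rfl fun A _ => ?_
  rw [sum_sub_distrib, ← sum_filter, ← sum_filter, filter_filter, filter_filter,
    jointCoeff, sub_mul, sum_mul, sum_mul]
  congr 2 <;> ext T <;> simp [and_comm]

theorem sum_mul_eq_apply_univ_iff (c : Finset α → ℝ) :
    (∀ v : Finset α → ℝ, v ∅ = 0 → ∑ A, c A * v A = v univ)
      ↔ ∀ S : Finset α, S.Nonempty → (if S = univ then (1 : ℝ) else 0) = c S := by
  constructor
  · intro h S hS
    have := h (fun A => if A = S then 1 else 0) (by simp [hS.ne_empty.symm])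
    simpa [eq_comm] using this.symm
  · intro h v hv
    have coeff : ∀ A, c A * v A = if A = univ then v A else 0 := by
      intro A
      rcases A.eq_empty_or_nonempty with rfl | hA
      · simp [hv]
      · rw [← h A hA]
        split_ifs <;> simp
    simp [coeff]

theorem stmt4_general (n k : ℕ)
    (p : Finset (Fin n) → Finset (Fin n) → ℝ)
    (φ : (Finset (Fin n) → ℝ) → Finset (Fin n) → ℝ)
    (hrep : ∀ v : Finset (Fin n) → ℝ, v ∅ = 0 → ∀ T : Finset (Fin n), T.Nonempty →
      φ v T = ∑ S ∈ Tᶜ.powerset, p T S * (v (S ∪ T) - v S)) :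
    (∀ v : Finset (Fin n) → ℝ, v ∅ = 0 →
        ∑ T ∈ univ.filter (fun T : Finset (Fin n) => T.Nonempty ∧ T.card ≤ k),
          φ v T = v univ)
    ↔ (∀ S : Finset (Fin n), S.Nonempty →
        (if S = univ then (1 : ℝ) else 0) =
          (∑ T ∈ S.powerset.filter (fun T => T.Nonempty ∧ T.card ≤ k), p T (S \ T))
          - ∑ T ∈ Sᶜ.powerset.filter (fun T => T.Nonempty ∧ T.card ≤ k), p T S) := by
  set P : Finset (Fin n) → Prop := fun T => T.Nonempty ∧ T.card ≤ k
  have linear : ∀ v : Finset (Fin n) → ℝ, v ∅ = 0 →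
      ∑ T ∈ univ.filter P, φ v T = ∑ A, jointCoeff P p A * v A := by
    intro v hv
    rw [← sum_sum_marginal_eq_sum_jointCoeff_mul]
    exact sum_congr rfl fun T hT => hrep v hv T (mem_filter.mp hT).2.1
  rw [← sum_mul_eq_apply_univ_iff]
  exact forall₂_congr fun v hv => by rw [linear v hv]; rfl

/-- Proposition: with `φ v T = ∑_{S ⊆ N \ T} p T S * (v (S ∪ T) - v S)`,
joint efficiency of order `k` holds iff the constants `p` satisfy the
`δ_N` equation for every nonempty `S ⊆ N`. -/
theorem stmt4 (n k : ℕ) (hk1 : 1 ≤ k) (hkn : k ≤ n)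
    (p : Finset (Fin n) → Finset (Fin n) → ℝ)
    (φ : (Finset (Fin n) → ℝ) → Finset (Fin n) → ℝ)
    (hrep : ∀ v : Finset (Fin n) → ℝ, v ∅ = 0 → ∀ T : Finset (Fin n), T.Nonempty →
      φ v T = ∑ S ∈ Tᶜ.powerset, p T S * (v (S ∪ T) - v S)) :
    (∀ v : Finset (Fin n) → ℝ, v ∅ = 0 →
        ∑ T ∈ univ.filter (fun T : Finset (Fin n) => T.Nonempty ∧ T.card ≤ k),
          φ v T = v univ)
    ↔ (∀ S : Finset (Fin n), S.Nonempty →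
        (if S = univ then (1 : ℝ) else 0) =
          (∑ T ∈ S.powerset.filter (fun T => T.Nonempty ∧ T.card ≤ k), p T (S \ T))
          - ∑ T ∈ Sᶜ.powerset.filter (fun T => T.Nonempty ∧ T.card ≤ k), p T S) :=
  stmt4_general n k p φ hrep
end

section
/- Fix 1 ≤ k ≤ n. Consider the recursive system q_0 = 1/(Σ_{i=1}^{k} C(n,i)) and, for r = 1,…,n−1, q_r = (Σ_{s = max(r−k,0)}^{r−1} C(r,s)·q_s) / (Σ_{s=1}^{min(k, n−r)} C(n−r, s)), together with the constraint Σ_{s=n−k}^{n−1} C(n,s)·q_s = 1. This system has a unique solution (q_0,…,q_{n−1}) in ℝ^n. -/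
/-!
The recursion alone determines `q`, so only the constraint needs an argument. Put
`P s = C(n, s) q_s` and let `C(n - s, t) P s` be the mass sent from `s` to `s + t`, for
`1 ≤ t ≤ k`. Since `C(n, r) C(r, s) = C(n, s) C(n - s, r - s)`, the recursion for `q_r` says
that the mass leaving `r` equals the mass arriving at `r` for `0 < r < n`, while the choice of
`q_0` makes the mass leaving `0` equal to `1`. All of it therefore arrives at `n`, and that is
the constraint.
-/

open Finset

theorem sum_range_sum_Icc_eq_sum_Icc_sum_Ico {M : Type*} [AddCommMonoid M] (n k : ℕ)
    (f : ℕ → ℕ → M) :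
    ∑ r ∈ range n, ∑ t ∈ Icc 1 (min k (n - r)), f r t =
      ∑ r ∈ Icc 1 n, ∑ s ∈ Ico (r - k) r, f s (r - s) := by
  rw [sum_sigma', sum_sigma']
  refine sum_nbij' (fun x => ⟨x.1 + x.2, x.1⟩) (fun x => ⟨x.2, x.1 - x.2⟩)
    ?_ ?_ ?_ ?_ ?_ <;> rintro ⟨a, b⟩ h <;>
    simp only [mem_sigma, mem_range, mem_Icc, mem_Ico, Sigma.mk.injEq, heq_eq_eq, and_true,
      Nat.add_sub_cancel_left] at h ⊢ <;>
    omega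

theorem sum_Ico_eq_sum_Icc_of_balance {M : Type*} [AddCancelCommMonoid M] (n k : ℕ)
    (f : ℕ → ℕ → M)
    (hbal : ∀ r, 1 ≤ r → r < n →
      ∑ t ∈ Icc 1 (min k (n - r)), f r t = ∑ s ∈ Ico (r - k) r, f s (r - s)) :
    ∑ s ∈ Ico (n - k) n, f s (n - s) = ∑ t ∈ Icc 1 (min k n), f 0 t := by
  obtain _ | m := n
  · simp
  have hcount := sum_range_sum_Icc_eq_sum_Icc_sum_Ico (m + 1) k f
  rw [range_eq_Ico, sum_eq_sum_Ico_succ_bot (by omega : 0 < m + 1), zero_add,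
    Ico_add_one_right_eq_Icc, sum_Icc_succ_top (by omega),
    ← sum_congr rfl fun r hr => hbal r (mem_Icc.1 hr).1 (by have := (mem_Icc.1 hr).2; omega),
    add_comm] at hcount
  simpa using (add_left_cancel hcount).symm

theorem sum_Icc_one_choose_pos {m k : ℕ} (hm : 1 ≤ m) (hk : 1 ≤ k) :
    0 < ∑ i ∈ Icc 1 k, (m.choose i : ℝ) :=
  calc (0 : ℝ) < m.choose 1 := by rw [Nat.choose_one_right]; exact_mod_cast hm
    _ ≤ ∑ i ∈ Icc 1 k, (m.choose i : ℝ) :=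
      single_le_sum (f := fun i => (m.choose i : ℝ)) (fun _ _ => by positivity)
        (mem_Icc.2 ⟨le_rfl, hk⟩)

noncomputable def recursiveSolution (n k : ℕ) : ℕ → ℝ
  | r =>
    if r = 0 then 1 / ∑ i ∈ Icc 1 k, (n.choose i : ℝ)
    else if r ≤ n - 1 then
      (∑ s ∈ (Ico (r - k) r).attach, (r.choose s : ℝ) * recursiveSolution n k s) /
        ∑ s ∈ Icc 1 (min k (n - r)), ((n - r).choose s : ℝ)
    else 0
  decreasing_by exact (mem_Ico.1 s.2).2

namespace recursiveSolution

variable {n k : ℕ}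

theorem zero : recursiveSolution n k 0 = 1 / ∑ i ∈ Icc 1 k, (n.choose i : ℝ) := by
  rw [recursiveSolution, if_pos rfl]

theorem of_le_sub_one {r : ℕ} (h1 : 1 ≤ r) (h2 : r ≤ n - 1) :
    recursiveSolution n k r =
      (∑ s ∈ Ico (r - k) r, (r.choose s : ℝ) * recursiveSolution n k s) /
        ∑ s ∈ Icc 1 (min k (n - r)), ((n - r).choose s : ℝ) := by
  rw [recursiveSolution, if_neg (by omega), if_pos h2,
    sum_attach _ fun s => (r.choose s : ℝ) * recursiveSolution n k s]

theorem of_le {r : ℕ} (hn : 1 ≤ n) (h : n ≤ r) : recursiveSolution n k r = 0 := by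
  rw [recursiveSolution, if_neg (by omega), if_neg (by omega)]

theorem eq_of_recursion {q : ℕ → ℝ} (hn : 1 ≤ n) (htop : ∀ r, n ≤ r → q r = 0)
    (h0 : q 0 = 1 / ∑ i ∈ Icc 1 k, (n.choose i : ℝ))
    (hrec : ∀ r, 1 ≤ r → r ≤ n - 1 →
      q r = (∑ s ∈ Ico (r - k) r, (r.choose s : ℝ) * q s) /
        ∑ s ∈ Icc 1 (min k (n - r)), ((n - r).choose s : ℝ)) :
    q = recursiveSolution n k := by
  funext r
  induction r using Nat.strong_induction_on with
  | _ r ih =>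
    obtain rfl | hr0 := Nat.eq_zero_or_pos r
    · rw [h0, zero]
    obtain hr | hr := le_or_gt n r
    · rw [htop r hr, of_le hn hr]
    rw [hrec r hr0 (by omega), of_le_sub_one hr0 (by omega)]
    congr 1
    exact sum_congr rfl fun s hs => by rw [ih s (mem_Ico.1 hs).2]

theorem sum_choose_mul_eq_one (hn : 1 ≤ n) (hk : 1 ≤ k) (hkn : k ≤ n) :
    ∑ s ∈ Ico (n - k) n, (n.choose s : ℝ) * recursiveSolution n k s = 1 := by
  set P : ℕ → ℝ := fun s => (n.choose s : ℝ) * recursiveSolution n k s with hP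
  have hbalance : ∀ r, 1 ≤ r → r < n →
      ∑ t ∈ Icc 1 (min k (n - r)), ((n - r).choose t : ℝ) * P r =
        ∑ s ∈ Ico (r - k) r, ((n - s).choose (r - s) : ℝ) * P s := by
    intro r hr1 hrn
    have hD := sum_Icc_one_choose_pos (m := n - r) (k := min k (n - r)) (by omega) (by omega)
    calc ∑ t ∈ Icc 1 (min k (n - r)), ((n - r).choose t : ℝ) * P r
        = n.choose r * (recursiveSolution n k r *
            ∑ t ∈ Icc 1 (min k (n - r)), ((n - r).choose t : ℝ)) := by
          rw [← sum_mul, hP]; ring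
      _ = ∑ s ∈ Ico (r - k) r, (n.choose r * r.choose s : ℝ) * recursiveSolution n k s := by
          rw [of_le_sub_one hr1 (by omega), div_mul_cancel₀ _ hD.ne', mul_sum]
          simp only [mul_assoc]
      _ = ∑ s ∈ Ico (r - k) r, ((n - s).choose (r - s) : ℝ) * P s := by
          refine sum_congr rfl fun s hs => ?_
          have hchoose : (n.choose r * r.choose s : ℝ) = n.choose s * (n - s).choose (r - s) :=
            mod_cast Nat.choose_mul (mem_Ico.1 hs).2.le
          rw [hchoose, hP]; ring
  have hflow :=
    sum_Ico_eq_sum_Icc_of_balance n k (fun s t => ((n - s).choose t : ℝ) * P s) hbalance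
  simp only [Nat.choose_self, Nat.cast_one, one_mul, Nat.sub_zero, min_eq_left hkn, hP,
    Nat.choose_zero_right, ← sum_mul, zero] at hflow
  rw [hflow, one_div, mul_inv_cancel₀ (sum_Icc_one_choose_pos hn hk).ne']

end recursiveSolution

/-- The recursive system defining `(q_0, …, q_{n-1})`, together with the
normalisation constraint, has a unique solution in `ℝ^n` (encoded as functions
`ℕ → ℝ` vanishing from index `n` on). -/
theorem stmt5 (n k : ℕ) (hn : 1 ≤ n) (hk1 : 1 ≤ k) (hkn : k ≤ n) :
    ∃! q : ℕ → ℝ,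
      (∀ r, n ≤ r → q r = 0) ∧
      q 0 = 1 / ∑ i ∈ Finset.Icc 1 k, (n.choose i : ℝ) ∧
      (∀ r, 1 ≤ r → r ≤ n - 1 →
        q r = (∑ s ∈ Finset.Ico (r - k) r, (r.choose s : ℝ) * q s) /
              (∑ s ∈ Finset.Icc 1 (min k (n - r)), ((n - r).choose s : ℝ))) ∧
      ∑ s ∈ Finset.Ico (n - k) n, (n.choose s : ℝ) * q s = 1 :=
  ⟨recursiveSolution n k,
    ⟨fun _ => recursiveSolution.of_le hn, recursiveSolution.zero,
      fun _ => recursiveSolution.of_le_sub_one,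
      recursiveSolution.sum_choose_mul_eq_one hn hk1 hkn⟩,
    fun _ ⟨htop, h0, hrec, _⟩ => recursiveSolution.eq_of_recursion hn htop h0 hrec⟩
end

section
/- Let k = n. Then the numbers q_r = Σ_{j=0}^{r} C(r,j)·(−2)^{r−j}/(2^{n−j} − 1), for r = 0,…,n−1, satisfy the recursive system q_0 = 1/(2^n − 1) and q_r = (Σ_{s=0}^{r−1} C(r,s) q_s)/(2^{n−r} − 1) for all 1 ≤ r ≤ n−1. -/
/-!
Write `d j = 1 / (2^(n-j) - 1)`, so that `q` is the binomial transform of `d` with weight `-2`.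
Composing it with the binomial transform of weight `1` gives the one of weight `-2 + 1 = -1`,
while `2^(n-r) (-2)^(r-j) = (-1)^(r-j) 2^(n-j)`. Hence
`2^(n-r) q_r - ∑_{s ≤ r} C(r,s) q_s = ∑_{j ≤ r} C(r,j) (-1)^(r-j) (2^(n-j) - 1) d j
= ∑_{j ≤ r} C(r,j) (-1)^(r-j)`, which is `(1 - 1)^r = 0` for `r ≥ 1`.
-/

open Finset

theorem sum_choose_mul_sum_choose_mul {R : Type*} [CommSemiring R] (a b : R) (d : ℕ → R)
    (r : ℕ) :
    ∑ s ∈ range (r + 1), (r.choose s : R) * b ^ (r - s) *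
        ∑ j ∈ range (s + 1), (s.choose j : R) * a ^ (s - j) * d j =
      ∑ j ∈ range (r + 1), (r.choose j : R) * (a + b) ^ (r - j) * d j := by
  simp_rw [mul_sum, range_eq_Ico]
  rw [← sum_Ico_Ico_comm]
  refine sum_congr rfl fun j hj => ?_
  have hjr : j ≤ r := Nat.lt_succ_iff.mp (mem_Ico.mp hj).2
  rw [sum_Ico_eq_sum_range, Nat.succ_sub hjr, add_pow, mul_sum, sum_mul]
  refine sum_congr rfl fun t _ => ?_
  have hc : (r.choose (j + t) : R) * ((j + t).choose j) = r.choose j * (r - j).choose t := by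
    rw [← Nat.cast_mul, ← Nat.cast_mul, Nat.choose_mul (Nat.le_add_right j t),
      Nat.add_sub_cancel_left]
  rw [Nat.add_sub_cancel_left, show r - (j + t) = r - j - t by omega]
  calc _ = (r.choose (j + t) * (j + t).choose j : R) * (a ^ t * b ^ (r - j - t) * d j) := by ring
    _ = _ := by rw [hc]; ring

theorem sum_range_choose_mul_neg_one_pow {R : Type*} [CommRing R] {r : ℕ} (hr : r ≠ 0) :
    ∑ j ∈ range (r + 1), (r.choose j : R) * (-1) ^ (r - j) = 0 := by
  have h := add_pow (1 : R) (-1) r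
  rw [add_neg_cancel, zero_pow hr] at h
  rw [h]
  exact sum_congr rfl fun j _ => by ring

theorem pow_sub_mul_neg_pow_sub {R : Type*} [CommRing R] (x : R) {j r n : ℕ} (hjr : j ≤ r)
    (hrn : r ≤ n) : x ^ (n - r) * (-x) ^ (r - j) = (-1) ^ (r - j) * x ^ (n - j) := by
  rw [neg_pow, mul_left_comm, ← pow_add, Nat.sub_add_sub_cancel hrn hjr]

theorem two_pow_sub_mul_sub_sum_choose_mul {R : Type*} [CommRing R] {b d : ℕ → R}
    (hb : ∀ s, b s = ∑ j ∈ range (s + 1), (s.choose j : R) * (-2) ^ (s - j) * d j)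
    {r n : ℕ} (hrn : r ≤ n) :
    2 ^ (n - r) * b r - ∑ s ∈ range (r + 1), (r.choose s : R) * b s =
      ∑ j ∈ range (r + 1), (r.choose j : R) * (-1) ^ (r - j) * ((2 ^ (n - j) - 1) * d j) := by
  have hsum : ∑ s ∈ range (r + 1), (r.choose s : R) * b s
      = ∑ j ∈ range (r + 1), (r.choose j : R) * (-1) ^ (r - j) * d j := by
    have h := sum_choose_mul_sum_choose_mul (-2 : R) 1 d r
    norm_num only [one_pow, mul_one] at h
    simpa only [hb] using h
  rw [hsum, hb, mul_sum, ← sum_sub_distrib]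
  refine sum_congr rfl fun j hj => ?_
  have h := pow_sub_mul_neg_pow_sub (2 : R) (Nat.lt_succ_iff.mp (mem_range.mp hj)) hrn
  linear_combination (r.choose j : R) * d j * h

theorem stmt7_general (n : ℕ)
    (q : ℕ → ℝ)
    (hq : ∀ r, q r = ∑ j ∈ Finset.range (r + 1),
      (r.choose j : ℝ) * (-2 : ℝ) ^ (r - j) / ((2 : ℝ) ^ (n - j) - 1)) :
    q 0 = 1 / ((2 : ℝ) ^ n - 1) ∧
    ∀ r, 1 ≤ r → r ≤ n - 1 →
      q r = (∑ s ∈ Finset.range r, (r.choose s : ℝ) * q s) /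
            ((2 : ℝ) ^ (n - r) - 1) := by
  refine ⟨by simp [hq], fun r hr hrn => ?_⟩
  set d : ℕ → ℝ := fun j => ((2 : ℝ) ^ (n - j) - 1)⁻¹
  have hd : ∀ j ≤ r, ((2 : ℝ) ^ (n - j) - 1) * d j = 1 := fun j hj =>
    mul_inv_cancel₀ (sub_ne_zero.2 (one_lt_pow₀ one_lt_two (by omega)).ne')
  have key := two_pow_sub_mul_sub_sum_choose_mul (b := q) (d := d)
    (fun s => by simp only [hq, d, div_eq_mul_inv]) (show r ≤ n by omega)
  have hzero : ∑ j ∈ range (r + 1),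
      (r.choose j : ℝ) * (-1) ^ (r - j) * ((2 ^ (n - j) - 1) * d j) = 0 := by
    rw [sum_congr rfl fun j hj => by rw [hd j (Nat.lt_succ_iff.mp (mem_range.mp hj)), mul_one]]
    exact sum_range_choose_mul_neg_one_pow (by omega)
  rw [hzero, sum_range_succ, Nat.choose_self] at key
  rw [eq_div_iff (left_ne_zero_of_mul_eq_one (hd r le_rfl))]
  linear_combination key

/-- For `k = n`, the closed form `q_r = ∑_{j=0}^r C(r,j)(-2)^{r-j}/(2^{n-j}-1)`
satisfies the recursive system `q_0 = 1/(2^n - 1)` and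
`q_r = (∑_{s=0}^{r-1} C(r,s) q_s)/(2^{n-r} - 1)` for `1 ≤ r ≤ n-1`. -/
theorem stmt7 (n : ℕ) (hn : 1 ≤ n)
    (q : ℕ → ℝ)
    (hq : ∀ r, q r = ∑ j ∈ Finset.range (r + 1),
      (r.choose j : ℝ) * (-2 : ℝ) ^ (r - j) / ((2 : ℝ) ^ (n - j) - 1)) :
    q 0 = 1 / ((2 : ℝ) ^ n - 1) ∧
    ∀ r, 1 ≤ r → r ≤ n - 1 →
      q r = (∑ s ∈ Finset.range r, (r.choose s : ℝ) * q s) /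
            ((2 : ℝ) ^ (n - r) - 1) :=
  stmt7_general n q hq
end

section
/- Let k = n and define q_r = Σ_{j=0}^{r} C(r,j)·(−2)^{r−j}/(2^{n−j}−1) for r = 0,…,n−1. Then Σ_{s=0}^{n−1} C(n,s)·q_s = 1. -/
/-!
Exchange the order of summation. Since `C(n,s) C(s,j) = C(n,j) C(n-j,s-j)`, the sum over `s` of the
terms with a fixed `j` is `C(n,j) ((-1)^m - (-2)^m) / (2^m - 1) = -C(n,j) (-1)^m` with `m = n - j`
(binomial theorem for `(-2 + 1)^m` without its top term). What is left is the alternating binomial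
sum `∑_{j<n} C(n,j) (-1)^(n-j) = (1 - 1)^n - 1 = -1`.
-/

open Finset

theorem sum_range_choose_mul_pow_mul_pow {R : Type*} [CommRing R] (x y : R) (m : ℕ) :
    ∑ t ∈ range m, (m.choose t : R) * x ^ t * y ^ (m - t) = (x + y) ^ m - x ^ m := by
  rw [add_pow, sum_range_succ, Nat.choose_self, Nat.sub_self]
  simp only [Nat.cast_one, pow_zero, mul_one, add_sub_cancel_right]
  exact sum_congr rfl fun t _ ↦ by ring

theorem sum_Ico_choose_mul_choose_mul_pow {R : Type*} [CommSemiring R] (y : R) (j n : ℕ) :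
    ∑ s ∈ Ico j n, (n.choose s : R) * s.choose j * y ^ (s - j) =
      n.choose j * ∑ t ∈ range (n - j), ((n - j).choose t : R) * y ^ t := by
  rw [sum_Ico_eq_sum_range, mul_sum]
  refine sum_congr rfl fun t _ ↦ ?_
  have hchoose : n.choose (j + t) * (j + t).choose j = n.choose j * (n - j).choose t := by
    rw [Nat.choose_mul (Nat.le_add_right j t), Nat.add_sub_cancel_left]
  rw [Nat.add_sub_cancel_left, ← mul_assoc, ← Nat.cast_mul, hchoose, Nat.cast_mul, mul_assoc]

theorem neg_one_pow_sub_neg_pow_div {K : Type*} [Field K] {a : K} {m : ℕ} (ha : a ^ m ≠ 1) :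
    ((-1) ^ m - (-a) ^ m) / (a ^ m - 1) = -(-1) ^ m := by
  rw [div_eq_iff (sub_ne_zero.mpr ha), neg_pow a]
  ring

/-- For `k = n`, with `q_r = ∑_{j=0}^r C(r,j)(-2)^{r-j}/(2^{n-j}-1)`, one has
`∑_{s=0}^{n-1} C(n,s) q_s = 1`. -/
theorem stmt8 (n : ℕ) (hn : 1 ≤ n)
    (q : ℕ → ℝ)
    (hq : ∀ r, q r = ∑ j ∈ Finset.range (r + 1),
      (r.choose j : ℝ) * (-2 : ℝ) ^ (r - j) / ((2 : ℝ) ^ (n - j) - 1)) :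
    ∑ s ∈ Finset.range n, (n.choose s : ℝ) * q s = 1 := by
  have hcol : ∀ j ∈ range n, (∑ s ∈ Ico j n, (n.choose s : ℝ) * s.choose j * (-2) ^ (s - j)) /
      ((2 : ℝ) ^ (n - j) - 1) = -((n.choose j : ℝ) * 1 ^ j * (-1) ^ (n - j)) := by
    intro j hj
    have hpow : (2 : ℝ) ^ (n - j) ≠ 1 :=
      (one_lt_pow₀ one_lt_two (Nat.sub_ne_zero_of_lt (mem_range.mp hj))).ne'
    rw [sum_Ico_choose_mul_choose_mul_pow, mul_div_assoc, one_pow, mul_one]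
    have := sum_range_choose_mul_pow_mul_pow (-2 : ℝ) 1 (n - j)
    simp only [one_pow, mul_one] at this
    rw [this, show (-2 : ℝ) + 1 = -1 by norm_num, neg_one_pow_sub_neg_pow_div hpow, mul_neg]
  calc ∑ s ∈ range n, (n.choose s : ℝ) * q s
      = ∑ s ∈ range n, ∑ j ∈ range (s + 1),
          (n.choose s : ℝ) * s.choose j * (-2) ^ (s - j) / ((2 : ℝ) ^ (n - j) - 1) := by
        simp only [hq, mul_sum, mul_div_assoc, mul_assoc]
    _ = ∑ j ∈ range n, (∑ s ∈ Ico j n, (n.choose s : ℝ) * s.choose j * (-2) ^ (s - j)) /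
          ((2 : ℝ) ^ (n - j) - 1) := by
        simp only [range_eq_Ico, sum_div]
        exact (sum_Ico_Ico_comm 0 n _).symm
    _ = -∑ j ∈ range n, (n.choose j : ℝ) * 1 ^ j * (-1) ^ (n - j) := by
        rw [sum_congr rfl hcol, sum_neg_distrib]
    _ = 1 := by
        rw [sum_range_choose_mul_pow_mul_pow, add_neg_cancel, zero_pow (by omega), one_pow]
        ring
end

section
/- For k = 1 (order of explanation 1), the joint Shapley value coincides with the classical Shapley value: the unique solution of the recursion q_0 = 1/n, q_r = (C(r,r−1)·q_{r−1})/(n−r) for 1 ≤ r ≤ n−1 is q_r = r!(n−r−1)!/n!, and hence φ_T^J(v) = Σ_{S ⊆ N∖{i}} (|S|!(n−|S|−1)!/n!)[v(S∪{i}) − v(S)] for each singleton T = {i}. -/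
open Finset

noncomputable def shapleyWeight (n r : ℕ) : ℝ :=
  (r.factorial : ℝ) * ((n - r - 1).factorial : ℝ) / (n.factorial : ℝ)

lemma shapleyWeight_zero {n : ℕ} (hn : 1 ≤ n) : shapleyWeight n 0 = 1 / (n : ℝ) := by
  obtain ⟨m, rfl⟩ := Nat.exists_eq_add_of_le' hn
  simp only [shapleyWeight, Nat.factorial_zero, Nat.add_sub_cancel, Nat.sub_zero,
    Nat.factorial_succ, Nat.cast_mul, Nat.cast_one]
  field_simp

lemma shapleyWeight_succ {n r : ℕ} (h : r + 1 < n) :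
    shapleyWeight n (r + 1) = ((r : ℝ) + 1) * shapleyWeight n r / ((n : ℝ) - ((r : ℝ) + 1)) := by
  have hsub : n - r - 1 = (n - (r + 1) - 1) + 1 := by omega
  have hgap : (n : ℝ) - ((r : ℝ) + 1) = ((n - (r + 1) - 1 : ℕ) : ℝ) + 1 := by
    rw [Nat.cast_sub (by omega), Nat.cast_sub (by omega)]
    push_cast
    ring
  rw [hgap, shapleyWeight, shapleyWeight, hsub, Nat.factorial_succ, Nat.factorial_succ]
  push_cast
  field_simp

lemma eq_shapleyWeight_of_recursion {n : ℕ} (hn : 1 ≤ n) {q : ℕ → ℝ}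
    (hq0 : q 0 = 1 / (n : ℝ))
    (hqr : ∀ r, 1 ≤ r → r ≤ n - 1 →
      q r = (r.choose (r - 1) : ℝ) * q (r - 1) / ((n : ℝ) - (r : ℝ))) :
    ∀ r, r ≤ n - 1 → q r = shapleyWeight n r := by
  intro r hr
  induction r with
  | zero => rw [hq0, shapleyWeight_zero hn]
  | succ r ih =>
    rw [hqr (r + 1) (Nat.le_add_left 1 r) hr, Nat.add_sub_cancel, Nat.choose_succ_self_right,
      ih (by omega), shapleyWeight_succ (by omega)]
    push_cast
    rfl

/-- For order of explanation `k = 1`, the joint Shapley value coincides with the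
classical Shapley value: the unique solution of the recursion `q_0 = 1/n`,
`q_r = (C(r, r-1) q_{r-1})/(n - r)` is `q_r = r!(n-r-1)!/n!`, and hence for a
singleton `T = {i}` the joint Shapley value is the classical Shapley value. -/
theorem stmt9 (n : ℕ) (hn : 1 ≤ n)
    (q : ℕ → ℝ)
    (hq0 : q 0 = 1 / (n : ℝ))
    (hqr : ∀ r, 1 ≤ r → r ≤ n - 1 →
      q r = (r.choose (r - 1) : ℝ) * q (r - 1) / ((n : ℝ) - (r : ℝ))) :
    (∀ r, r ≤ n - 1 →
      q r = (r.factorial : ℝ) * ((n - r - 1).factorial : ℝ) / (n.factorial : ℝ)) ∧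
    (∀ v : Finset (Fin n) → ℝ, v ∅ = 0 → ∀ i : Fin n,
      ∑ S ∈ ({i} : Finset (Fin n))ᶜ.powerset, q S.card * (v (S ∪ {i}) - v S) =
      ∑ S ∈ ({i} : Finset (Fin n))ᶜ.powerset,
        (S.card.factorial : ℝ) * ((n - S.card - 1).factorial : ℝ) / (n.factorial : ℝ)
          * (v (S ∪ {i}) - v S)) := by
  have hq := eq_shapleyWeight_of_recursion hn hq0 hqr
  refine ⟨hq, fun v _ i => sum_congr rfl fun S hS => ?_⟩
  have hcard : S.card ≤ n - 1 := by
    simpa [card_compl] using card_le_card (mem_powerset.mp hS)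
  rw [hq S.card hcard, shapleyWeight]
end

section
/- Fix 1 ≤ k ≤ n and define φ_T^J(v) = Σ_{S ⊆ N∖T} q_{|S|}·[v(S∪T) − v(S)] where (q_0,…,q_{n−1}) solves the recursive system q_0 = 1/(Σ_{i=1}^{k} C(n,i)), q_r = (Σ_{s=max(r−k,0)}^{r−1} C(r,s)q_s)/(Σ_{s=1}^{min(k,n−r)} C(n−r,s)). Then for every game v, Σ over nonempty T ⊆ N with |T| ≤ k of φ_T^J(v) equals v(N) (joint efficiency). -/
/-!
Expanding every `φ^J_T(v)` and collecting terms, the value `v(W)` of a coalition with `|W| = r`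
appears with coefficient `g(r) - q_r e(n - r)`, where `e(m)` counts the subsets of an `m`-set of
size between `1` and `k` and `g(r) = ∑_{j=1}^{k} C(r, j) q_{r-j}`. The recursion for `q_r` says
exactly that this coefficient vanishes for `0 < r < n`, so the total is `g(n) v(N)`. Testing this
identity on the game that is `1` on every nonempty coalition, where each `φ^J_T` equals `q_0`,
gives `g(n) = q_0 e(n) = 1`.
-/

open Finset

section Combinatorics

variable {α R : Type*}

lemma sum_powerset_filter_nonempty_card_le [Semiring R] (s : Finset α) (k : ℕ) (f : ℕ → R) :
    ∑ T ∈ s.powerset with T.Nonempty ∧ T.card ≤ k, f T.card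
      = ∑ j ∈ Icc 1 k, (s.card.choose j : R) * f j := by
  rw [← sum_fiberwise_of_maps_to' (t := Icc 1 k) (g := card) _ f]
  · refine sum_congr rfl fun j hj => ?_
    have hfiber : ((s.powerset.filter fun T => T.Nonempty ∧ T.card ≤ k).filter
        fun T => T.card = j) = powersetCard j s := by
      rw [mem_Icc] at hj
      ext T
      simp only [mem_filter, mem_powerset, mem_powersetCard, ← one_le_card]
      constructor
      · rintro ⟨⟨hTs, -⟩, rfl⟩
        exact ⟨hTs, rfl⟩
      · rintro ⟨hTs, rfl⟩
        exact ⟨⟨hTs, hj⟩, rfl⟩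
    rw [hfiber, sum_const, card_powersetCard, nsmul_eq_mul]
  · intro T hT
    simp only [mem_filter, ← one_le_card] at hT
    exact mem_Icc.mpr hT.2

variable [Fintype α] [DecidableEq α]

lemma sum_powerset_compl_union [AddCommMonoid R] (T : Finset α) (h : Finset α → R) :
    ∑ S ∈ Tᶜ.powerset, h (S ∪ T) = ∑ W with T ⊆ W, h W := by
  refine sum_nbij' (· ∪ T) (· \ T) ?_ ?_ ?_ ?_ fun _ _ => rfl
  · intro S _
    simp
  · intro W _
    simp [subset_iff]
  · intro S hS
    exact union_sdiff_cancel_right (subset_compl_iff_disjoint_right.mp (mem_powerset.mp hS))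
  · intro W hW
    exact sdiff_union_of_subset (mem_filter.mp hW).2

end Combinatorics

/-- The number of subsets `T` of an `m`-set with `1 ≤ |T| ≤ k`. -/
def smallSubsetCount (k m : ℕ) : ℝ :=
  ∑ j ∈ Icc 1 k, (m.choose j : ℝ)

/-- The total weight `∑ q_{|W \ T|}` over the subsets `T` of an `r`-set `W` with `1 ≤ |T| ≤ k`. -/
def jointInWeight (q : ℕ → ℝ) (k r : ℕ) : ℝ :=
  ∑ j ∈ Icc 1 k, (r.choose j : ℝ) * q (r - j)

lemma sum_Icc_one_min_choose_mul {R : Type*} [Semiring R] (k m : ℕ) (f : ℕ → R) :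
    ∑ j ∈ Icc 1 (min k m), (m.choose j : R) * f j = ∑ j ∈ Icc 1 k, (m.choose j : R) * f j := by
  refine sum_subset (Icc_subset_Icc_right (min_le_left k m)) fun j hj hjm => ?_
  simp only [mem_Icc] at hj hjm
  rw [Nat.choose_eq_zero_of_lt (by omega), Nat.cast_zero, zero_mul]

lemma smallSubsetCount_eq_sum_Icc_min (k m : ℕ) :
    smallSubsetCount k m = ∑ j ∈ Icc 1 (min k m), (m.choose j : ℝ) := by
  simpa [smallSubsetCount] using (sum_Icc_one_min_choose_mul k m fun _ => (1 : ℝ)).symm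

lemma smallSubsetCount_zero (k : ℕ) : smallSubsetCount k 0 = 0 :=
  sum_eq_zero fun _ hj => by rw [Nat.choose_eq_zero_of_lt (mem_Icc.mp hj).1, Nat.cast_zero]

lemma smallSubsetCount_pos {k m : ℕ} (hk : 1 ≤ k) (hm : 1 ≤ m) : 0 < smallSubsetCount k m :=
  calc (0 : ℝ) < (m.choose 1 : ℝ) := by rw [Nat.choose_one_right]; exact_mod_cast hm
    _ ≤ smallSubsetCount k m :=
      single_le_sum (f := fun j => (m.choose j : ℝ)) (fun _ _ => by positivity)
        (mem_Icc.mpr ⟨le_rfl, hk⟩)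

lemma jointInWeight_eq_sum_Ico (q : ℕ → ℝ) (k r : ℕ) :
    jointInWeight q k r = ∑ s ∈ Ico (r - k) r, (r.choose s : ℝ) * q s := by
  rw [jointInWeight, ← sum_Icc_one_min_choose_mul]
  refine sum_nbij' (r - ·) (r - ·) ?_ ?_ ?_ ?_ ?_
  · intro j hj
    simp only [mem_Icc, mem_Ico] at hj ⊢
    omega
  · intro s hs
    simp only [mem_Icc, mem_Ico] at hs ⊢
    omega
  · intro j hj
    simp only [mem_Icc] at hj
    omega
  · intro s hs
    simp only [mem_Ico] at hs
    omega
  · intro j hj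
    rw [mem_Icc] at hj
    rw [Nat.choose_symm (by omega)]

section JointShapley

variable {α : Type*} [Fintype α] [DecidableEq α] (k : ℕ) (q : ℕ → ℝ) (v : Finset α → ℝ)

lemma sum_sum_powerset_compl_mul_union :
    ∑ T : Finset α with T.Nonempty ∧ T.card ≤ k, ∑ S ∈ Tᶜ.powerset, q S.card * v (S ∪ T)
      = ∑ W, jointInWeight q k W.card * v W :=
  calc _ = ∑ T : Finset α with T.Nonempty ∧ T.card ≤ k,
          ∑ W with T ⊆ W, q (W.card - T.card) * v W := by
        refine sum_congr rfl fun T _ => ?_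
        rw [← sum_powerset_compl_union]
        refine sum_congr rfl fun S hS => ?_
        rw [card_union_of_disjoint (subset_compl_iff_disjoint_right.mp (mem_powerset.mp hS)),
          Nat.add_sub_cancel]
    _ = ∑ W, ∑ T ∈ W.powerset with T.Nonempty ∧ T.card ≤ k, q (W.card - T.card) * v W :=
        sum_comm' fun T W => by simp only [mem_filter, mem_univ, mem_powerset, true_and]; tauto
    _ = _ := sum_congr rfl fun W _ => by
        rw [← sum_mul]
        exact congrArg (· * v W)
          (sum_powerset_filter_nonempty_card_le W k fun j => q (W.card - j))

lemma sum_sum_powerset_compl_mul :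
    ∑ T : Finset α with T.Nonempty ∧ T.card ≤ k, ∑ S ∈ Tᶜ.powerset, q S.card * v S
      = ∑ W, q W.card * smallSubsetCount k Wᶜ.card * v W :=
  calc _ = ∑ W, ∑ T ∈ Wᶜ.powerset with T.Nonempty ∧ T.card ≤ k, q W.card * v W :=
        sum_comm' fun T W => by
          simp only [mem_filter, mem_univ, mem_powerset, true_and, subset_compl_comm]; tauto
    _ = _ := sum_congr rfl fun W _ => by
        have hcount := sum_powerset_filter_nonempty_card_le Wᶜ k fun _ => (1 : ℝ)
        simp only [sum_const, nsmul_eq_mul, mul_one] at hcount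
        rw [sum_const, nsmul_eq_mul, hcount, smallSubsetCount]
        ring

lemma sum_jointShapley_eq_sum_coeff_mul :
    ∑ T : Finset α with T.Nonempty ∧ T.card ≤ k, ∑ S ∈ Tᶜ.powerset, q S.card * (v (S ∪ T) - v S)
      = ∑ W, (jointInWeight q k W.card - q W.card * smallSubsetCount k Wᶜ.card) * v W := by
  simp only [mul_sub, sum_sub_distrib, sum_sum_powerset_compl_mul_union,
    sum_sum_powerset_compl_mul, sub_mul]

variable {k q}

lemma sum_jointShapley_eq_jointInWeight_mul
    (hbal : ∀ r, 0 < r → r < Fintype.card α →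
      jointInWeight q k r = q r * smallSubsetCount k (Fintype.card α - r))
    {v : Finset α → ℝ} (hv : v ∅ = 0) :
    ∑ T : Finset α with T.Nonempty ∧ T.card ≤ k, ∑ S ∈ Tᶜ.powerset, q S.card * (v (S ∪ T) - v S)
      = jointInWeight q k (Fintype.card α) * v univ := by
  rw [sum_jointShapley_eq_sum_coeff_mul, sum_eq_single univ]
  · rw [compl_univ, card_empty, smallSubsetCount_zero, mul_zero, sub_zero, card_univ]
  · intro W _ hW
    obtain rfl | hne := W.eq_empty_or_nonempty
    · rw [hv, mul_zero]
    · rw [hbal W.card hne.card_pos ((card_lt_iff_ne_univ W).mpr hW), card_compl, sub_self,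
        zero_mul]
  · exact fun h => (h (mem_univ _)).elim

lemma sum_powerset_compl_indicator_nonempty {T : Finset α} (hT : T.Nonempty) :
    ∑ S ∈ Tᶜ.powerset, q S.card *
      ((if (S ∪ T).Nonempty then 1 else 0) - (if S.Nonempty then 1 else 0)) = q 0 := by
  rw [sum_eq_single ∅]
  · simp [hT]
  · intro S _ hS
    simp [nonempty_iff_ne_empty.mpr hS, hT.mono subset_union_right]
  · exact fun h => (h (empty_mem_powerset _)).elim

lemma jointInWeight_card_eq_one [Nonempty α]
    (hbal : ∀ r, 0 < r → r < Fintype.card α →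
      jointInWeight q k r = q r * smallSubsetCount k (Fintype.card α - r))
    (hq0 : q 0 * smallSubsetCount k (Fintype.card α) = 1) :
    jointInWeight q k (Fintype.card α) = 1 := by
  have key := sum_jointShapley_eq_jointInWeight_mul hbal
    (v := fun S : Finset α => if S.Nonempty then 1 else 0) (by simp)
  have hcount := sum_powerset_filter_nonempty_card_le (univ : Finset α) k fun _ => (1 : ℝ)
  simp only [sum_const, nsmul_eq_mul, mul_one, powerset_univ, card_univ] at hcount
  rw [sum_congr rfl fun T hT => sum_powerset_compl_indicator_nonempty (mem_filter.mp hT).2.1,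
    sum_const, nsmul_eq_mul, hcount, if_pos univ_nonempty, mul_one] at key
  rw [← key, ← hq0, smallSubsetCount, mul_comm]

end JointShapley

theorem stmt10_general (n k : ℕ) (hn : 1 ≤ n) (hk1 : 1 ≤ k)
    (q : ℕ → ℝ)
    (hq0 : q 0 = 1 / ∑ i ∈ Finset.Icc 1 k, (n.choose i : ℝ))
    (hqr : ∀ r, 1 ≤ r → r ≤ n - 1 →
      q r = (∑ s ∈ Finset.Ico (r - k) r, (r.choose s : ℝ) * q s) /
            (∑ s ∈ Finset.Icc 1 (min k (n - r)), ((n - r).choose s : ℝ))) :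
    ∀ v : Finset (Fin n) → ℝ, v ∅ = 0 →
      ∑ T ∈ univ.filter (fun T : Finset (Fin n) => T.Nonempty ∧ T.card ≤ k),
        (∑ S ∈ Tᶜ.powerset, q S.card * (v (S ∪ T) - v S)) = v univ := by
  intro v hv
  have : Nonempty (Fin n) := ⟨⟨0, hn⟩⟩
  have hbal : ∀ r, 0 < r → r < Fintype.card (Fin n) →
      jointInWeight q k r = q r * smallSubsetCount k (Fintype.card (Fin n) - r) := by
    intro r hr0 hrn
    rw [Fintype.card_fin] at hrn ⊢
    rw [hqr r hr0 (by omega), ← smallSubsetCount_eq_sum_Icc_min,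
      div_mul_cancel₀ _ (smallSubsetCount_pos hk1 (by omega)).ne', jointInWeight_eq_sum_Ico]
  have hq0' : q 0 * smallSubsetCount k (Fintype.card (Fin n)) = 1 := by
    rw [Fintype.card_fin, hq0, one_div]
    exact inv_mul_cancel₀ (smallSubsetCount_pos hk1 hn).ne'
  rw [sum_jointShapley_eq_jointInWeight_mul hbal hv, jointInWeight_card_eq_one hbal hq0', one_mul]

/-- Joint efficiency of the joint Shapley value: summing `φ^J_T(v)` over all
nonempty coalitions `T` with `|T| ≤ k` gives `v(N)`. -/
theorem stmt10 (n k : ℕ) (hn : 1 ≤ n) (hk1 : 1 ≤ k) (hkn : k ≤ n)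
    (q : ℕ → ℝ)
    (hq0 : q 0 = 1 / ∑ i ∈ Finset.Icc 1 k, (n.choose i : ℝ))
    (hqr : ∀ r, 1 ≤ r → r ≤ n - 1 →
      q r = (∑ s ∈ Finset.Ico (r - k) r, (r.choose s : ℝ) * q s) /
            (∑ s ∈ Finset.Icc 1 (min k (n - r)), ((n - r).choose s : ℝ))) :
    ∀ v : Finset (Fin n) → ℝ, v ∅ = 0 →
      ∑ T ∈ univ.filter (fun T : Finset (Fin n) => T.Nonempty ∧ T.card ≤ k),
        (∑ S ∈ Tᶜ.powerset, q S.card * (v (S ∪ T) - v S)) = v univ :=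
  stmt10_general n k hn hk1 q hq0 hqr
end

section
/- Fix 1 ≤ k ≤ n and define the joint Shapley value φ_T^J(v) = Σ_{S⊆N∖T} q_{|S|}[v(S∪T)−v(S)] with (q_r) solving the standard recursion. Then φ^J satisfies joint symmetry: if nonempty T, T' ⊆ N and the game v satisfies (1) v(S∪T) = v(S∪T') for all S ⊆ N∖(T∪T'), (2) v(S∪T) = v(S) for all S ⊆ N∖T with S ∩ T' ≠ ∅, and (3) v(S∪T') = v(S) for all S ⊆ N∖T' with S ∩ T ≠ ∅, then φ_T^J(v) = φ_{T'}^J(v). -/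
open Finset

/-!
Coalitions containing a member of `T'` gain nothing from adding `T`, so the joint Shapley value of
`T` only sees coalitions disjoint from `T ∪ T'`, and symmetrically for `T'`. On those coalitions
the two marginal contributions agree by hypothesis.
-/

section JointShapley

variable {α R : Type*} [Fintype α] [DecidableEq α] [Ring R]

def jointShapley (q : ℕ → R) (v : Finset α → R) (T : Finset α) : R :=
  ∑ S ∈ Tᶜ.powerset, q S.card * (v (S ∪ T) - v S)

lemma inter_nonempty_of_subset_compl_of_not_subset_compl_union {S T T' : Finset α}
    (hS : S ⊆ Tᶜ) (hST' : ¬ S ⊆ (T ∪ T')ᶜ) : (S ∩ T').Nonempty := by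
  rw [compl_union] at hST'
  obtain ⟨x, hxS, hxT'⟩ := not_subset.mp fun h => hST' (subset_inter hS h)
  exact ⟨x, mem_inter.mpr ⟨hxS, by simpa using hxT'⟩⟩

lemma jointShapley_eq_sum_powerset_compl_union (q : ℕ → R) (v : Finset α → R)
    (T T' : Finset α) (hnull : ∀ S ⊆ Tᶜ, (S ∩ T').Nonempty → v (S ∪ T) = v S) :
    jointShapley q v T = ∑ S ∈ (T ∪ T')ᶜ.powerset, q S.card * (v (S ∪ T) - v S) := by
  refine (sum_subset (powerset_mono.mpr (compl_subset_compl.mpr subset_union_left)) ?_).symm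
  intro S hS hST'
  rw [mem_powerset] at hS hST'
  rw [hnull S hS (inter_nonempty_of_subset_compl_of_not_subset_compl_union hS hST'), sub_self,
    mul_zero]

end JointShapley

theorem stmt13_general (n : ℕ)
    (q : ℕ → ℝ) :
    ∀ v : Finset (Fin n) → ℝ, v ∅ = 0 →
      ∀ T T' : Finset (Fin n), T.Nonempty → T'.Nonempty →
      (∀ S ⊆ (T ∪ T')ᶜ, v (S ∪ T) = v (S ∪ T')) →
      (∀ S ⊆ Tᶜ, (S ∩ T').Nonempty → v (S ∪ T) = v S) →
      (∀ S ⊆ T'ᶜ, (S ∩ T).Nonempty → v (S ∪ T') = v S) →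
      ∑ S ∈ Tᶜ.powerset, q S.card * (v (S ∪ T) - v S) =
      ∑ S ∈ T'ᶜ.powerset, q S.card * (v (S ∪ T') - v S) := by
  intro v _ T T' _ _ hswap hnullT hnullT'
  change jointShapley q v T = jointShapley q v T'
  rw [jointShapley_eq_sum_powerset_compl_union q v T T' hnullT,
    jointShapley_eq_sum_powerset_compl_union q v T' T hnullT', union_comm T' T]
  exact sum_congr rfl fun S hS => by rw [hswap S (mem_powerset.mp hS)]

/-- The joint Shapley value satisfies joint symmetry. -/
theorem stmt13 (n k : ℕ) (hn : 1 ≤ n) (hk1 : 1 ≤ k) (hkn : k ≤ n)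
    (q : ℕ → ℝ)
    (hq0 : q 0 = 1 / ∑ i ∈ Finset.Icc 1 k, (n.choose i : ℝ))
    (hqr : ∀ r, 1 ≤ r → r ≤ n - 1 →
      q r = (∑ s ∈ Finset.Ico (r - k) r, (r.choose s : ℝ) * q s) /
            (∑ s ∈ Finset.Icc 1 (min k (n - r)), ((n - r).choose s : ℝ))) :
    ∀ v : Finset (Fin n) → ℝ, v ∅ = 0 →
      ∀ T T' : Finset (Fin n), T.Nonempty → T'.Nonempty →
      (∀ S ⊆ (T ∪ T')ᶜ, v (S ∪ T) = v (S ∪ T')) →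
      (∀ S ⊆ Tᶜ, (S ∩ T').Nonempty → v (S ∪ T) = v S) →
      (∀ S ⊆ T'ᶜ, (S ∩ T).Nonempty → v (S ∪ T') = v S) →
      ∑ S ∈ Tᶜ.powerset, q S.card * (v (S ∪ T) - v S) =
      ∑ S ∈ T'ᶜ.powerset, q S.card * (v (S ∪ T') - v S) :=
  stmt13_general n q
end

section
/- Fix 1 ≤ k ≤ n. Suppose an index φ of the form φ_T(v) = Σ_{S⊆N∖T} p^T(S)[v(S∪T)−v(S)] satisfies the efficiency constraint (equation with δ_N) and joint anonymity. Then the constants satisfy p^T(S) = p^{T'}(S') whenever |S| = |S'| and |T| = |T'|, for all nonempty T, T' ⊆ N, S ⊆ N∖T, S' ⊆ N∖T'. -/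
/-!
Test the index on the game `v = Pi.single (S ∪ T) 1` that is `1` exactly on the coalition `S ∪ T`:
since `S ∪ T` is reached from a unique `R ⊆ Tᶜ` by adding `T` and is never `R` itself, `φ v T`
equals `p T S`. A permutation mapping `S` to `S'` and `T` to `T'` carries this game to the one
for `S' ∪ T'`, so joint anonymity gives `p T S = p T' S'`.
-/

open Finset

theorem Finset.exists_perm_image_eq_of_disjoint {β : Type*} [DecidableEq β]
    {S T S' T' : Finset β} (h : Disjoint S T) (h' : Disjoint S' T') (hS : #S = #S')
    (hT : #T = #T') : ∃ σ : Equiv.Perm β, S.image σ = S' ∧ T.image σ = T' := by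
  let eS : S ≃ S' := equivOfCardEq hS
  let eT : T ≃ T' := equivOfCardEq hT
  obtain ⟨σ, hσ⟩ := Equiv.Perm.exists_extending_pair
    (Sum.elim ((↑) : S → β) ((↑) : T → β)) (Sum.elim (fun s ↦ (eS s : β)) (fun t ↦ eT t))
    (Subtype.val_injective.sumElim Subtype.val_injective
      fun s t hst ↦ disjoint_left.mp h s.2 (hst ▸ t.2))
    ((Subtype.val_injective.comp eS.injective).sumElim (Subtype.val_injective.comp eT.injective)
      fun s t hst ↦ disjoint_left.mp h' (eS s).2 ((show (eS s : β) = eT t from hst) ▸ (eT t).2))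
  refine ⟨σ, eq_of_subset_of_card_le ?_ ?_, eq_of_subset_of_card_le ?_ ?_⟩
  · exact image_subset_iff.mpr fun x hx ↦ (hσ (.inl ⟨x, hx⟩)).symm ▸ (eS ⟨x, hx⟩).2
  · rw [card_image_of_injective _ σ.injective, hS]
  · exact image_subset_iff.mpr fun x hx ↦ (hσ (.inr ⟨x, hx⟩)).symm ▸ (eT ⟨x, hx⟩).2
  · rw [card_image_of_injective _ σ.injective, hT]

theorem Finset.single_comp_image_symm {β M : Type*} [DecidableEq β] [Zero M]
    (σ : Equiv.Perm β) (U : Finset β) (x : M) :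
    (fun R ↦ (Pi.single U x : Finset β → M) (R.image σ.symm)) = Pi.single (U.image σ) x := by
  have image_symm_eq_iff : ∀ R : Finset β, R.image σ.symm = U ↔ R = U.image σ := fun R ↦ by
    rw [← (image_injective σ.injective).eq_iff, image_image]
    simp
  ext R
  simp only [Pi.single_apply, image_symm_eq_iff]

theorem Finset.sum_powerset_compl_mul_sub_single {β : Type*} [Fintype β] [DecidableEq β]
    (q : Finset β → ℝ) {S T : Finset β} (hT : T.Nonempty) (hS : S ⊆ Tᶜ) :
    ∑ R ∈ Tᶜ.powerset, q R * ((Pi.single (S ∪ T) 1 : Finset β → ℝ) (R ∪ T)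
      - (Pi.single (S ∪ T) 1 : Finset β → ℝ) R) = q S := by
  have ne_union : ∀ R ⊆ Tᶜ, R ≠ S ∪ T := fun R hR hRST ↦ by
    obtain ⟨t, ht⟩ := hT
    exact disjoint_right.mp (subset_compl_iff_disjoint_right.mp hR) ht
      (hRST ▸ mem_union_right S ht)
  rw [sum_eq_single_of_mem S (mem_powerset.mpr hS)]
  · simp [ne_union S hS]
  · intro R hR hRS
    rw [mem_powerset] at hR
    have union_ne : R ∪ T ≠ S ∪ T := fun h ↦ hRS <| by
      rw [← union_sdiff_cancel_right (subset_compl_iff_disjoint_right.mp hR), h,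
        union_sdiff_cancel_right (subset_compl_iff_disjoint_right.mp hS)]
    simp [union_ne, ne_union R hR]

theorem stmt14_general (n : ℕ)
    (p : Finset (Fin n) → Finset (Fin n) → ℝ)
    (φ : (Finset (Fin n) → ℝ) → Finset (Fin n) → ℝ)
    (hrep : ∀ v : Finset (Fin n) → ℝ, v ∅ = 0 → ∀ T : Finset (Fin n), T.Nonempty →
      φ v T = ∑ S ∈ Tᶜ.powerset, p T S * (v (S ∪ T) - v S))
    (hanon : ∀ σ : Equiv.Perm (Fin n), ∀ v : Finset (Fin n) → ℝ, v ∅ = 0 →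
      ∀ T : Finset (Fin n), T.Nonempty →
        φ v T = φ (fun R => v (R.image σ.symm)) (T.image σ)) :
    ∀ T T' : Finset (Fin n), T.Nonempty → T'.Nonempty →
      ∀ S ⊆ Tᶜ, ∀ S' ⊆ T'ᶜ, S.card = S'.card → T.card = T'.card →
        p T S = p T' S' := by
  intro T T' hT hT' S hS S' hS' hcS hcT
  obtain ⟨σ, hσS, hσT⟩ := exists_perm_image_eq_of_disjoint
    (subset_compl_iff_disjoint_right.mp hS) (subset_compl_iff_disjoint_right.mp hS') hcS hcT
  have single_empty : ∀ U : Finset (Fin n), U.Nonempty → (Pi.single U 1 : _ → ℝ) ∅ = 0 :=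
    fun U hU ↦ Pi.single_eq_of_ne hU.ne_empty.symm 1
  calc p T S = φ (Pi.single (S ∪ T) 1) T := by
        rw [hrep _ (single_empty _ hT.inr) T hT, sum_powerset_compl_mul_sub_single _ hT hS]
    _ = φ (Pi.single (S' ∪ T') 1) T' := by
        rw [hanon σ _ (single_empty _ hT.inr) T hT, single_comp_image_symm, image_union, hσS, hσT]
    _ = p T' S' := by
        rw [hrep _ (single_empty _ hT'.inr) T' hT', sum_powerset_compl_mul_sub_single _ hT' hS']

/-- If an index of the form `φ v T = ∑_{S ⊆ N\T} p T S (v(S∪T) - v S)` satisfies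
the efficiency constraint and joint anonymity, then `p T S = p T' S'` whenever
`|S| = |S'|` and `|T| = |T'|`. -/
theorem stmt14 (n k : ℕ) (hn : 1 ≤ n) (hk1 : 1 ≤ k) (hkn : k ≤ n)
    (p : Finset (Fin n) → Finset (Fin n) → ℝ)
    (φ : (Finset (Fin n) → ℝ) → Finset (Fin n) → ℝ)
    (hrep : ∀ v : Finset (Fin n) → ℝ, v ∅ = 0 → ∀ T : Finset (Fin n), T.Nonempty →
      φ v T = ∑ S ∈ Tᶜ.powerset, p T S * (v (S ∪ T) - v S))
    (heff : ∀ S : Finset (Fin n), S.Nonempty →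
      (if S = univ then (1 : ℝ) else 0) =
        (∑ T ∈ S.powerset.filter (fun T => T.Nonempty ∧ T.card ≤ k), p T (S \ T))
        - ∑ T ∈ Sᶜ.powerset.filter (fun T => T.Nonempty ∧ T.card ≤ k), p T S)
    (hanon : ∀ σ : Equiv.Perm (Fin n), ∀ v : Finset (Fin n) → ℝ, v ∅ = 0 →
      ∀ T : Finset (Fin n), T.Nonempty →
        φ v T = φ (fun R => v (R.image σ.symm)) (T.image σ)) :
    ∀ T T' : Finset (Fin n), T.Nonempty → T'.Nonempty →
      ∀ S ⊆ Tᶜ, ∀ S' ⊆ T'ᶜ, S.card = S'.card → T.card = T'.card →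
        p T S = p T' S' :=
  stmt14_general n p φ hrep hanon
end

section
/- Fix 1 ≤ k ≤ n. Suppose an index φ of the form φ_T(v) = Σ_{S⊆N∖T} p^T(S)[v(S∪T)−v(S)] satisfies joint symmetry. Then the constants satisfy p^T(S) = p^{T'}(S) for all nonempty T, T' ⊆ N and all S ⊆ N∖(T∪T'). -/
/-!
Fix nonempty `T, T'` and `S` outside `U = T ∪ T'`, and test the index on the game worth `1`
exactly on the coalitions that meet `U` and whose part outside `U` is `S`. Adding a nonempty
`T₀ ⊆ U` to a coalition `A` changes its worth only when `A = S`, so `φ_{T₀}` of this game is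
`p^{T₀}(S)`. The game satisfies the hypotheses of joint symmetry for `T` and `T'`, hence
`p^T(S) = p^{T'}(S)`.
-/

open Finset

namespace JointSymmetry

variable {α : Type*} [DecidableEq α]

def traceGame (U S A : Finset α) : ℝ :=
  if A \ U = S ∧ (A ∩ U).Nonempty then 1 else 0

variable {U S T A : Finset α}

theorem traceGame_empty : traceGame U S ∅ = 0 := by
  simp [traceGame]

theorem traceGame_of_inter_nonempty (hA : (A ∩ U).Nonempty) :
    traceGame U S A = if A \ U = S then 1 else 0 := by
  simp [traceGame, hA]

theorem traceGame_union_of_subset (hT : T.Nonempty) (hTU : T ⊆ U) :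
    traceGame U S (A ∪ T) = if A \ U = S then 1 else 0 := by
  rw [traceGame_of_inter_nonempty (hT.mono (subset_inter subset_union_right hTU)),
    union_sdiff_distrib, sdiff_eq_empty_iff_subset.mpr hTU, union_empty]

theorem traceGame_union_of_inter_nonempty (hTU : T ⊆ U) (hA : (A ∩ U).Nonempty) :
    traceGame U S (A ∪ T) = traceGame U S A := by
  rw [traceGame_of_inter_nonempty hA,
    traceGame_of_inter_nonempty (hA.mono (inter_subset_inter_right subset_union_left)),
    union_sdiff_distrib, sdiff_eq_empty_iff_subset.mpr hTU, union_empty]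

theorem traceGame_marginal (hSU : Disjoint S U) (hT : T.Nonempty) (hTU : T ⊆ U) :
    traceGame U S (A ∪ T) - traceGame U S A = if A = S then 1 else 0 := by
  rw [traceGame_union_of_subset hT hTU]
  by_cases hAS : A = S
  · subst hAS
    simp [traceGame, hSU.sdiff_eq_left, disjoint_iff_inter_eq_empty.mp hSU]
  by_cases htrace : A \ U = S
  · -- `A` must meet `U`, since otherwise `A = A \ U = S`.
    have hA : (A ∩ U).Nonempty := by
      by_contra hempty
      rw [not_nonempty_iff_eq_empty, ← disjoint_iff_inter_eq_empty,
        ← Finset.sdiff_eq_self_iff_disjoint, htrace] at hempty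
      exact hAS hempty.symm
    simp [traceGame_of_inter_nonempty hA, htrace, hAS]
  · simp [traceGame, htrace, hAS]

theorem sum_mul_traceGame_marginal [Fintype α] (p : Finset α → ℝ) (hSU : Disjoint S U)
    (hT : T.Nonempty) (hTU : T ⊆ U) (hST : S ⊆ Tᶜ) :
    ∑ A ∈ Tᶜ.powerset, p A * (traceGame U S (A ∪ T) - traceGame U S A) = p S := by
  simp_rw [traceGame_marginal hSU hT hTU, mul_ite, mul_one, mul_zero]
  rw [sum_ite_eq' _ S p, if_pos (mem_powerset.mpr hST)]

end JointSymmetry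

open JointSymmetry

theorem stmt15_general (n : ℕ)
    (p : Finset (Fin n) → Finset (Fin n) → ℝ)
    (φ : (Finset (Fin n) → ℝ) → Finset (Fin n) → ℝ)
    (hrep : ∀ v : Finset (Fin n) → ℝ, v ∅ = 0 → ∀ T : Finset (Fin n), T.Nonempty →
      φ v T = ∑ S ∈ Tᶜ.powerset, p T S * (v (S ∪ T) - v S))
    (hsym : ∀ v : Finset (Fin n) → ℝ, v ∅ = 0 →
      ∀ T T' : Finset (Fin n), T.Nonempty → T'.Nonempty →
      (∀ S ⊆ (T ∪ T')ᶜ, v (S ∪ T) = v (S ∪ T')) →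
      (∀ S ⊆ Tᶜ, (S ∩ T').Nonempty → v (S ∪ T) = v S) →
      (∀ S ⊆ T'ᶜ, (S ∩ T).Nonempty → v (S ∪ T') = v S) →
      φ v T = φ v T') :
    ∀ T T' : Finset (Fin n), T.Nonempty → T'.Nonempty →
      ∀ S ⊆ (T ∪ T')ᶜ, p T S = p T' S := by
  intro T T' hT hT' S hS
  have hSU : Disjoint S (T ∪ T') := subset_compl_iff_disjoint_right.mp hS
  have hsymm := hsym (traceGame (T ∪ T') S) traceGame_empty T T' hT hT'
    (fun A _ => by
      rw [traceGame_union_of_subset hT subset_union_left,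
        traceGame_union_of_subset hT' subset_union_right])
    (fun A _ hA => traceGame_union_of_inter_nonempty subset_union_left
      (hA.mono (inter_subset_inter_left subset_union_right)))
    (fun A _ hA => traceGame_union_of_inter_nonempty subset_union_right
      (hA.mono (inter_subset_inter_left subset_union_left)))
  rwa [hrep _ traceGame_empty T hT, hrep _ traceGame_empty T' hT',
    sum_mul_traceGame_marginal _ hSU hT subset_union_left
      (hS.trans (compl_subset_compl.mpr subset_union_left)),
    sum_mul_traceGame_marginal _ hSU hT' subset_union_right
      (hS.trans (compl_subset_compl.mpr subset_union_right))] at hsymm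

/-- If an index of the form `φ v T = ∑_{S ⊆ N\T} p T S (v(S∪T) - v S)` satisfies
joint symmetry, then `p T S = p T' S` for all nonempty `T, T'` and
`S ⊆ N \ (T ∪ T')`. -/
theorem stmt15 (n k : ℕ) (hn : 1 ≤ n) (hk1 : 1 ≤ k) (hkn : k ≤ n)
    (p : Finset (Fin n) → Finset (Fin n) → ℝ)
    (φ : (Finset (Fin n) → ℝ) → Finset (Fin n) → ℝ)
    (hrep : ∀ v : Finset (Fin n) → ℝ, v ∅ = 0 → ∀ T : Finset (Fin n), T.Nonempty →
      φ v T = ∑ S ∈ Tᶜ.powerset, p T S * (v (S ∪ T) - v S))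
    (hsym : ∀ v : Finset (Fin n) → ℝ, v ∅ = 0 →
      ∀ T T' : Finset (Fin n), T.Nonempty → T'.Nonempty →
      (∀ S ⊆ (T ∪ T')ᶜ, v (S ∪ T) = v (S ∪ T')) →
      (∀ S ⊆ Tᶜ, (S ∩ T').Nonempty → v (S ∪ T) = v S) →
      (∀ S ⊆ T'ᶜ, (S ∩ T).Nonempty → v (S ∪ T') = v S) →
      φ v T = φ v T') :
    ∀ T T' : Finset (Fin n), T.Nonempty → T'.Nonempty →
      ∀ S ⊆ (T ∪ T')ᶜ, p T S = p T' S :=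
  stmt15_general n p φ hrep hsym
end

section
/- For N = {1,2} there is no index φ satisfying joint linearity, joint null, joint efficiency of order k = 2, and strong joint symmetry (where strong joint symmetry states: for nonempty T, T' ⊆ N, if v(S∪T) = v(S∪T') for all S ⊆ N∖(T∪T') then φ_T(v) = φ_{T'}(v)). -/
/-!
Write `e_R = Pi.single R 1` for the game worth `1` on the coalition `R` and `0` elsewhere.
In `e_{0}` the pair is null and has the same worth as `{1}`, so `φ_N = φ_{1} = 0`, and
efficiency forces `φ_{0} = 0`. In the unanimity game `e_N` the two players are
symmetric. Their sum is the game in which player `0` is a dictator: there player `1` is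
null and `{0}` is symmetric to `N`, so efficiency needs `φ_{0} = 1/2`, while
additivity gives `φ_{0} = φ_{0}(e_{0}) + φ_{0}(e_N) = φ_{1}(e_N)`, which equals
`φ_{1}(e_{0} + e_N) - φ_{1}(e_{0}) = 0`.
-/

open Finset

section Axioms

variable {N : Type*} [Fintype N] [DecidableEq N]

def JointNull (φ : (Finset N → ℝ) → Finset N → ℝ) : Prop :=
  ∀ v : Finset N → ℝ, v ∅ = 0 → ∀ T : Finset N, T.Nonempty →
    (∀ S ⊆ Tᶜ, v (S ∪ T) = v S) → φ v T = 0

def StrongJointSymmetry (φ : (Finset N → ℝ) → Finset N → ℝ) : Prop :=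
  ∀ v : Finset N → ℝ, v ∅ = 0 → ∀ T T' : Finset N, T.Nonempty → T'.Nonempty →
    (∀ S ⊆ (T ∪ T')ᶜ, v (S ∪ T) = v (S ∪ T')) → φ v T = φ v T'

variable {φ : (Finset N → ℝ) → Finset N → ℝ} {v : Finset N → ℝ}

theorem JointNull.apply_univ_eq_zero [Nonempty N] (hnull : JointNull φ) (hv : v ∅ = 0)
    (hvN : v univ = 0) : φ v univ = 0 :=
  hnull v hv univ univ_nonempty fun S hS => by
    rw [compl_univ, subset_empty] at hS
    simp [hS, hv, hvN]

theorem StrongJointSymmetry.apply_eq_of_union_eq_univ (hsym : StrongJointSymmetry φ)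
    (hv : v ∅ = 0) {T T' : Finset N} (hT : T.Nonempty) (hT' : T'.Nonempty)
    (hcover : T ∪ T' = univ) (hvT : v T = v T') : φ v T = φ v T' :=
  hsym v hv T T' hT hT' fun S hS => by
    rw [hcover, compl_univ, subset_empty] at hS
    simpa [hS] using hvT

end Axioms

section TwoPlayers

variable {φ : (Finset (Fin 2) → ℝ) → Finset (Fin 2) → ℝ}

theorem apply_single_zero_eq_zero (hnull : JointNull φ) (hsym : StrongJointSymmetry φ)
    (heff : ∀ v : Finset (Fin 2) → ℝ, v ∅ = 0 →
      φ v {0} + φ v {1} + φ v univ = v univ) :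
    φ (Pi.single {0} 1) {0} = 0 ∧ φ (Pi.single {0} 1) {1} = 0 := by
  have hv : (Pi.single {0} 1 : Finset (Fin 2) → ℝ) ∅ = 0 := by simp +decide
  have hpair : φ (Pi.single {0} 1) univ = 0 :=
    hnull.apply_univ_eq_zero hv (by simp +decide)
  have hone : φ (Pi.single {0} 1) {1} = 0 := by
    rw [← hpair]
    exact hsym.apply_eq_of_union_eq_univ hv (singleton_nonempty _) univ_nonempty
      (by decide) (by simp +decide)
  have heff₀ := heff _ hv
  rw [hpair, hone] at heff₀
  exact ⟨by simpa +decide using heff₀, hone⟩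

theorem apply_unanimity_zero_eq_one (hsym : StrongJointSymmetry φ) :
    φ (Pi.single univ 1) {0} = φ (Pi.single univ 1) {1} :=
  hsym.apply_eq_of_union_eq_univ (by simp +decide) (singleton_nonempty _)
    (singleton_nonempty _) (by decide) (by simp +decide)

theorem apply_dictator_one_eq_zero (hnull : JointNull φ) :
    φ (Pi.single {0} 1 + Pi.single univ 1) {1} = 0 :=
  hnull _ (by simp +decide) {1} (singleton_nonempty _) fun S hS => by
    rw [show ({1} : Finset (Fin 2))ᶜ = {0} by decide, subset_singleton_iff] at hS
    rcases hS with rfl | rfl <;> simp +decide [Pi.single_apply]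

theorem apply_dictator_zero_eq_univ (hsym : StrongJointSymmetry φ) :
    φ (Pi.single {0} 1 + Pi.single univ 1) {0} = φ (Pi.single {0} 1 + Pi.single univ 1) univ :=
  hsym.apply_eq_of_union_eq_univ (by simp +decide) (singleton_nonempty _)
    univ_nonempty (by decide) (by simp +decide)

end TwoPlayers

/-- For `N = {1,2}` there is no index satisfying joint linearity, joint null,
joint efficiency of order `k = 2`, and strong joint symmetry. -/
theorem stmt17 :
    ¬ ∃ φ : (Finset (Fin 2) → ℝ) → Finset (Fin 2) → ℝ,
      -- joint linearity
      (∀ v w : Finset (Fin 2) → ℝ, v ∅ = 0 → w ∅ = 0 →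
        ∀ T : Finset (Fin 2), φ (v + w) T = φ v T + φ w T) ∧
      (∀ (c : ℝ) (v : Finset (Fin 2) → ℝ), v ∅ = 0 →
        ∀ T : Finset (Fin 2), φ (c • v) T = c * φ v T) ∧
      -- joint null
      (∀ v : Finset (Fin 2) → ℝ, v ∅ = 0 → ∀ T : Finset (Fin 2), T.Nonempty →
        (∀ S ⊆ Tᶜ, v (S ∪ T) = v S) → φ v T = 0) ∧
      -- joint efficiency of order 2
      (∀ v : Finset (Fin 2) → ℝ, v ∅ = 0 →
        φ v {0} + φ v {1} + φ v univ = v univ) ∧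
      -- strong joint symmetry
      (∀ v : Finset (Fin 2) → ℝ, v ∅ = 0 →
        ∀ T T' : Finset (Fin 2), T.Nonempty → T'.Nonempty →
        (∀ S ⊆ (T ∪ T')ᶜ, v (S ∪ T) = v (S ∪ T')) →
        φ v T = φ v T') := by
  rintro ⟨φ, hadd, -, hnull, heff, hsym⟩
  have hA_empty : (Pi.single {0} 1 : Finset (Fin 2) → ℝ) ∅ = 0 := by simp +decide
  have hC_empty : (Pi.single univ 1 : Finset (Fin 2) → ℝ) ∅ = 0 := by simp +decide
  obtain ⟨hA_zero, hA_one⟩ := apply_single_zero_eq_zero hnull hsym heff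
  have hC_one : φ (Pi.single univ 1) {1} = 0 := by
    linarith [hadd _ _ hA_empty hC_empty {1}, apply_dictator_one_eq_zero hnull, hA_one]
  have hD_zero : φ (Pi.single {0} 1 + Pi.single univ 1) {0} = 0 := by
    rw [hadd _ _ hA_empty hC_empty {0}, hA_zero, apply_unanimity_zero_eq_one hsym, hC_one,
      add_zero]
  have heffD := heff (Pi.single {0} 1 + Pi.single univ 1) (by simp +decide)
  rw [apply_dictator_one_eq_zero hnull, ← apply_dictator_zero_eq_univ hsym, hD_zero] at heffD
  simp +decide at heffD
end

section
/- Fix 1 ≤ k ≤ n and let (q_0,…,q_{n−1}) be the unique solution of the recursion q_0 = 1/(Σ_{i=1}^{k} C(n,i)), q_r = (Σ_{s=max(r−k,0)}^{r−1} C(r,s) q_s)/(Σ_{s=1}^{min(k,n−r)} C(n−r,s)) for 1 ≤ r ≤ n−1. Then Σ_{s=n−k}^{n−1} C(n,s)·q_s = 1. -/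
/-!
Read `p_s = C(n,s) q_s` as mass at state `s`; from each `s < n` a flow of `C(n-s, t-s) p_s`
goes to every `t` with `s < t ≤ min (s + k) n`. Multiplying the recursion by `C(n,r)` and using
`C(n,r) C(r,s) = C(n,s) C(n-s,r-s)` says that the outflow of every intermediate state
`1 ≤ r ≤ n-1` equals its inflow, while `q_0` makes the outflow of `0` equal to `1` and nothing
flows into `0`. Summing all flows once by source and once by target, the inflow of `n`, which
is the sum in question, is therefore `1`.
-/

open Finset

theorem sum_range_sum_Ioc_eq_sum_Icc_sum_Ico {M : Type*} [AddCommMonoid M] (n k : ℕ)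
    (g : ℕ → ℕ → M) :
    ∑ s ∈ range n, ∑ t ∈ Ioc s (min (s + k) n), g s t =
      ∑ t ∈ Icc 1 n, ∑ s ∈ Ico (t - k) t, g s t :=
  sum_comm' fun s t => by simp only [mem_range, mem_Ioc, mem_Icc, mem_Ico]; omega

theorem sum_Ioc_min_eq_sum_Icc_sub {M : Type*} [AddCommMonoid M] {n s : ℕ} (hs : s ≤ n) (k : ℕ)
    (f : ℕ → M) :
    ∑ t ∈ Ioc s (min (s + k) n), f (t - s) = ∑ j ∈ Icc 1 (min k (n - s)), f j := by
  rw [show min (s + k) n = s + min k (n - s) by omega, ← Icc_add_one_left_eq_Ioc,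
    ← map_add_left_Icc, sum_map]
  simp

theorem eq_of_sum_range_eq_sum_Icc {M : Type*} [AddCommGroup M] {n : ℕ} (hn : 1 ≤ n)
    (outflow inflow : ℕ → M)
    (htotal : ∑ s ∈ range n, outflow s = ∑ t ∈ Icc 1 n, inflow t)
    (hbal : ∀ r, 1 ≤ r → r < n → outflow r = inflow r) : outflow 0 = inflow n := by
  rw [range_eq_Ico, sum_eq_sum_Ico_succ_bot (by omega), ← Ico_add_one_right_eq_Icc,
    sum_Ico_succ_top hn, sum_congr rfl fun r hr => hbal r (mem_Ico.1 hr).1 (mem_Ico.1 hr).2,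
    add_comm] at htotal
  exact add_left_cancel htotal

theorem sum_Icc_one_choose_pos_s19 {n m : ℕ} (hm : 1 ≤ m) (hmn : m ≤ n) :
    0 < ∑ j ∈ Icc 1 m, (n.choose j : ℝ) :=
  sum_pos (fun _ hj => Nat.cast_pos.2 (Nat.choose_pos ((mem_Icc.1 hj).2.trans hmn)))
    ⟨1, mem_Icc.2 ⟨le_rfl, hm⟩⟩

/-- The joint Shapley coefficients `(q_0, …, q_{n-1})` satisfy the normalisation
`∑_{s=n-k}^{n-1} C(n,s) q_s = 1`. -/
theorem stmt19 (n k : ℕ) (hn : 1 ≤ n) (hk1 : 1 ≤ k) (hkn : k ≤ n)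
    (q : ℕ → ℝ)
    (hq0 : q 0 = 1 / ∑ i ∈ Finset.Icc 1 k, (n.choose i : ℝ))
    (hqr : ∀ r, 1 ≤ r → r ≤ n - 1 →
      q r = (∑ s ∈ Finset.Ico (r - k) r, (r.choose s : ℝ) * q s) /
            (∑ s ∈ Finset.Icc 1 (min k (n - r)), ((n - r).choose s : ℝ))) :
    ∑ s ∈ Finset.Ico (n - k) n, (n.choose s : ℝ) * q s = 1 := by
  have hbal : ∀ r, 1 ≤ r → r < n →
      n.choose r * q r * ∑ j ∈ Icc 1 (min k (n - r)), ((n - r).choose j : ℝ) =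
        ∑ s ∈ Ico (r - k) r, ((n - s).choose (r - s) : ℝ) * (n.choose s * q s) := by
    intro r hr hrn
    rw [hqr r hr (by omega), mul_assoc,
      div_mul_cancel₀ _ (sum_Icc_one_choose_pos_s19 (by omega) (min_le_right _ _)).ne', mul_sum]
    refine sum_congr rfl fun s hs => ?_
    rw [← mul_assoc, ← mul_assoc, ← Nat.cast_mul, Nat.choose_mul (mem_Ico.1 hs).2.le,
      Nat.cast_mul, mul_comm (n.choose s : ℝ)]
  have htotal :
      ∑ s ∈ range n, n.choose s * q s * ∑ j ∈ Icc 1 (min k (n - s)), ((n - s).choose j : ℝ) =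
        ∑ t ∈ Icc 1 n, ∑ s ∈ Ico (t - k) t, ((n - s).choose (t - s) : ℝ) * (n.choose s * q s) := by
    rw [← sum_range_sum_Ioc_eq_sum_Icc_sum_Ico]
    refine sum_congr rfl fun s hs => ?_
    rw [← sum_Ioc_min_eq_sum_Icc_sub (mem_range.1 hs).le k, mul_sum]
    exact sum_congr rfl fun t _ => mul_comm _ _
  calc ∑ s ∈ Ico (n - k) n, (n.choose s : ℝ) * q s
      = ∑ s ∈ Ico (n - k) n, ((n - s).choose (n - s) : ℝ) * (n.choose s * q s) := by
        simp only [Nat.choose_self, Nat.cast_one, one_mul]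
    _ = n.choose 0 * q 0 * ∑ j ∈ Icc 1 (min k (n - 0)), ((n - 0).choose j : ℝ) :=
      (eq_of_sum_range_eq_sum_Icc hn _ _ htotal hbal).symm
    _ = 1 := by
      rw [Nat.choose_zero_right, Nat.cast_one, one_mul, Nat.sub_zero, min_eq_left hkn, hq0]
      exact one_div_mul_cancel (sum_Icc_one_choose_pos_s19 hk1 hkn).ne'
end
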